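/- arXiv:2505.02855 — 8 statements merged into one kernel-verified Lean document; each statement's English description precedes it below -/
import Mathlib

section
/- Let (X,P) be a Markov chain on a countable set, Y ⊆ X a recurrent subset, and Q the induced walk on Y. If h is a bounded Q-harmonic function on Y, then the function h̃ on X defined by h̃(x) = E_x[h(Z_{τ₀})] = Σ_{y∈Y} α(x,y) h(y), where α(x,y) = P_x(Z_{τ₀} = y) and τ₀ is the first hitting time of Y, is a bounded P-harmonic function on X extending h. -/
open scoped Classical

noncomputable section

variable {X : Type*}

/-- A transition matrix: nonnegative entries and each row sums to 1. -/
def IsMarkov (p : X → X → ℝ) : Prop :=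
  (∀ x y, 0 ≤ p x y) ∧ ∀ x, HasSum (p x) 1

/-- `n`-step transition probabilities. -/
noncomputable def stepPow (p : X → X → ℝ) : ℕ → X → X → ℝ
  | 0, x, y => if x = y then 1 else 0
  | n + 1, x, y => ∑' z, p x z * stepPow p n z y

/-- Irreducibility of the chain. -/
def ChainIrreducible (p : X → X → ℝ) : Prop :=
  ∀ x y, ∃ n, 0 < stepPow p n x y

/-- `alphaHit p Y n x y` is the probability, starting at `x`, that the walk first meets `Y`
at time `n` (times `≥ 0`), and does so at the point `y`.  (This is the distribution of
`Z_{τ₀}` together with the value of `τ₀`.) -/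
noncomputable def alphaHit (p : X → X → ℝ) (Y : Set X) : ℕ → X → X → ℝ
  | 0, x, y => if x = y ∧ x ∈ Y then 1 else 0
  | n + 1, x, y => if x ∈ Y then 0 else ∑' z, p x z * alphaHit p Y n z y

/-- Probability, starting at `x`, that the walk first meets `Y` at a time `≥ 1`, that this
first meeting time equals `n + 1`, and that the meeting point is `y`
(distribution of `Z_{τ₁}` for a start in `Y`, resp. of the first entrance after time `0`). -/
noncomputable def firstHit (p : X → X → ℝ) (Y : Set X) (n : ℕ) (x y : X) : ℝ :=
  ∑' z, p x z * alphaHit p Y n z y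

/-- The induced chain on `Y`: `q x y = P_x(Z_{τ₁} = y)`. -/
noncomputable def inducedQ (p : X → X → ℝ) (Y : Set X) (x y : X) : ℝ :=
  ∑' n, firstHit p Y n x y

/-- `Y` is recurrent: from every starting point, the walk almost surely meets `Y`. -/
def RecurrentSet (p : X → X → ℝ) (Y : Set X) : Prop :=
  ∀ x, ∑' y, (∑' n, alphaHit p Y n x y) = 1

/-- The harmonic extension of a function on `Y` to all of `X`, via the distribution of the
first entrance point `Z_{τ₀}` of `Y`:  `h̃(x) = E_x[h(Z_{τ₀})] = Σ_{y ∈ Y} α(x,y) h(y)`. -/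
noncomputable def harmonicExt (p : X → X → ℝ) (Y : Set X) (h : X → ℝ) (x : X) : ℝ :=
  ∑' y, (∑' n, alphaHit p Y n x y) * h y

/-!
First-step analysis. Off `Y` the entrance distribution `α(x, ·)` is the induced kernel
`q(x, ·)`, and for every `x` one has `∑_z p(x, z) α(z, ·) = q(x, ·)`, so `P h̃ = Q h`. On `Y`
this is `h = h̃` by `Q`-harmonicity, off `Y` it is `h̃` itself. Recurrence makes `α(x, ·)` a
probability vector supported on `Y`, which gives the bound and, with the nonnegativity of all
kernels, justifies every interchange of summations.
-/

open Finset

section ProbabilityVector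

variable {ι : Type*} {w f : ι → ℝ} {C : ℝ}

lemma abs_mul_le_mul_of_abs_le (hw0 : ∀ i, 0 ≤ w i) (hf : ∀ i, w i ≠ 0 → |f i| ≤ C) (i : ι) :
    |w i * f i| ≤ w i * C := by
  rcases eq_or_ne (w i) 0 with hi | hi
  · simp [hi]
  · rw [abs_mul, abs_of_nonneg (hw0 i)]
    exact mul_le_mul_of_nonneg_left (hf i hi) (hw0 i)

lemma summable_mul_of_abs_le (hw0 : ∀ i, 0 ≤ w i) (hw : Summable w)
    (hf : ∀ i, w i ≠ 0 → |f i| ≤ C) : Summable fun i => w i * f i :=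
  Summable.of_norm_bounded (hw.mul_right C) (abs_mul_le_mul_of_abs_le hw0 hf)

lemma abs_tsum_mul_le (hw0 : ∀ i, 0 ≤ w i) (hw : HasSum w 1)
    (hf : ∀ i, w i ≠ 0 → |f i| ≤ C) : |∑' i, w i * f i| ≤ C :=
  tsum_of_norm_bounded (f := fun i => w i * f i) (by simpa using hw.mul_right C)
    (abs_mul_le_mul_of_abs_le hw0 hf)

lemma summable_prod_mul_of_nonneg {κ : Type*} {k : ι → κ → ℝ} (hw0 : ∀ i, 0 ≤ w i)
    (hk0 : ∀ i j, 0 ≤ k i j) (hk : ∀ i, Summable (k i))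
    (hwk : Summable fun i => w i * ∑' j, k i j) :
    Summable fun ij : ι × κ => w ij.1 * k ij.1 ij.2 :=
  (summable_prod_of_nonneg fun ij => mul_nonneg (hw0 ij.1) (hk0 ij.1 ij.2)).2
    ⟨fun i => (hk i).mul_left (w i), by simpa only [tsum_mul_left] using hwk⟩

end ProbabilityVector

section HittingDistribution

variable {p : X → X → ℝ} {Y : Set X} {x y : X}

lemma alphaHit_zero_of_notMem (hx : x ∉ Y) (y : X) : alphaHit p Y 0 x y = 0 :=
  if_neg fun h : x = y ∧ x ∈ Y => hx h.2

lemma alphaHit_succ_of_notMem (hx : x ∉ Y) (n : ℕ) (y : X) :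
    alphaHit p Y (n + 1) x y = firstHit p Y n x y := by
  rw [alphaHit, if_neg hx, firstHit]

lemma alphaHit_eq_zero_of_notMem_right (hy : y ∉ Y) : ∀ n x, alphaHit p Y n x y = 0
  | 0, x => if_neg fun h : x = y ∧ x ∈ Y => hy (h.1 ▸ h.2)
  | n + 1, _ => by simp [alphaHit, alphaHit_eq_zero_of_notMem_right hy n]

lemma alphaHit_nonneg (hp : IsMarkov p) : ∀ n x y, 0 ≤ alphaHit p Y n x y
  | 0, x, y => by rw [alphaHit]; split_ifs <;> norm_num
  | n + 1, x, y => by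
    rw [alphaHit]
    split_ifs
    · rfl
    · exact tsum_nonneg fun z => mul_nonneg (hp.1 x z) (alphaHit_nonneg hp n z y)

lemma sum_range_alphaHit_le_one (hp : IsMarkov p) :
    ∀ N x y, ∑ n ∈ range N, alphaHit p Y n x y ≤ 1
  | 0, _, _ => by simp
  | N + 1, x, y => by
    rw [sum_range_succ']
    by_cases hx : x ∈ Y
    · simp only [alphaHit, if_pos hx, sum_const_zero, zero_add]
      split_ifs <;> norm_num
    have hle : ∀ n ∈ range N, ∀ z, |alphaHit p Y n z y| ≤ 1 := fun n hn z => by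
      rw [abs_of_nonneg (alphaHit_nonneg hp n z y)]
      exact (single_le_sum (fun m _ => alphaHit_nonneg hp m z y) hn).trans
        (sum_range_alphaHit_le_one hp N z y)
    calc ∑ n ∈ range N, alphaHit p Y (n + 1) x y + alphaHit p Y 0 x y
        = ∑' z, p x z * ∑ n ∈ range N, alphaHit p Y n z y := by
          simp_rw [alphaHit_zero_of_notMem hx, add_zero, alphaHit_succ_of_notMem hx, firstHit,
            mul_sum]
          exact (Summable.tsum_finsetSum fun n hn =>
            summable_mul_of_abs_le (hp.1 x) (hp.2 x).summable fun z _ => hle n hn z).symm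
      _ ≤ 1 := (le_abs_self _).trans <| abs_tsum_mul_le (hp.1 x) (hp.2 x) fun z _ => by
          rw [abs_of_nonneg (sum_nonneg fun n _ => alphaHit_nonneg hp n z y)]
          exact sum_range_alphaHit_le_one hp N z y

lemma summable_alphaHit (hp : IsMarkov p) (x y : X) : Summable fun n => alphaHit p Y n x y :=
  summable_of_sum_range_le (alphaHit_nonneg hp · x y) (sum_range_alphaHit_le_one hp · x y)

/-- The entrance distribution `α(x, y) = P_x(Z_{τ₀} = y)`. -/
def hitProb (p : X → X → ℝ) (Y : Set X) (x y : X) : ℝ :=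
  ∑' n, alphaHit p Y n x y

lemma hitProb_nonneg (hp : IsMarkov p) (x y : X) : 0 ≤ hitProb p Y x y :=
  tsum_nonneg (alphaHit_nonneg hp · x y)

lemma hitProb_le_one (hp : IsMarkov p) (x y : X) : hitProb p Y x y ≤ 1 :=
  Real.tsum_le_of_sum_range_le (alphaHit_nonneg hp · x y) (sum_range_alphaHit_le_one hp · x y)

lemma hitProb_eq_zero_of_notMem_right (hy : y ∉ Y) (x : X) : hitProb p Y x y = 0 := by
  simp [hitProb, alphaHit_eq_zero_of_notMem_right hy]

lemma mem_of_hitProb_ne_zero (hxy : hitProb p Y x y ≠ 0) : y ∈ Y :=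
  by_contra fun hy => hxy (hitProb_eq_zero_of_notMem_right hy x)

lemma hitProb_of_mem (hx : x ∈ Y) (y : X) : hitProb p Y x y = if x = y then 1 else 0 := by
  rw [hitProb, tsum_eq_single 0 fun n hn => ?_]
  · simp [alphaHit, hx]
  · obtain ⟨m, rfl⟩ := Nat.exists_eq_succ_of_ne_zero hn
    simp [alphaHit, hx]

lemma hitProb_of_notMem (hx : x ∉ Y) (y : X) : hitProb p Y x y = inducedQ p Y x y := by
  rw [hitProb, inducedQ, ← Nat.succ_injective.tsum_eq]
  · simp_rw [Nat.succ_eq_add_one, alphaHit_succ_of_notMem hx]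
  · rintro (_ | n) hn
    · exact absurd (alphaHit_zero_of_notMem hx y) hn
    · exact ⟨n, rfl⟩

lemma tsum_mul_hitProb (hp : IsMarkov p) (x y : X) :
    ∑' z, p x z * hitProb p Y z y = inducedQ p Y x y := by
  have hs : Summable (Function.uncurry fun z n => p x z * alphaHit p Y n z y) :=
    summable_prod_mul_of_nonneg (hp.1 x) (fun z n => alphaHit_nonneg hp n z y)
      (summable_alphaHit hp · y) <|
      summable_mul_of_abs_le (hp.1 x) (hp.2 x).summable fun z _ =>
        (abs_of_nonneg (hitProb_nonneg hp z y)).trans_le (hitProb_le_one hp z y)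
  simp_rw [hitProb, ← tsum_mul_left, inducedQ, firstHit]
  exact hs.tsum_comm.symm

lemma RecurrentSet.hasSum_hitProb (hrec : RecurrentSet p Y) (x : X) :
    HasSum (hitProb p Y x) 1 := by
  have hsum : ∑' y, hitProb p Y x y = 1 := hrec x
  have hs : Summable (hitProb p Y x) := by
    by_contra hs
    simp [tsum_eq_zero_of_not_summable hs] at hsum
  exact hs.hasSum_iff.2 hsum

end HittingDistribution

section HarmonicExtension

variable {p : X → X → ℝ} {Y : Set X} {h : X → ℝ} {C : ℝ}

lemma harmonicExt_eq_tsum_hitProb {x : X} :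
    harmonicExt p Y h x = ∑' y, hitProb p Y x y * h y :=
  rfl

lemma harmonicExt_of_mem {x : X} (hx : x ∈ Y) : harmonicExt p Y h x = h x := by
  simp [harmonicExt_eq_tsum_hitProb, hitProb_of_mem hx]

lemma harmonicExt_of_notMem {x : X} (hx : x ∉ Y) :
    harmonicExt p Y h x = ∑' y, inducedQ p Y x y * h y := by
  simp_rw [harmonicExt_eq_tsum_hitProb, hitProb_of_notMem hx]

lemma abs_harmonicExt_le (hp : IsMarkov p) (hrec : RecurrentSet p Y)
    (hbdd : ∀ y ∈ Y, |h y| ≤ C) (x : X) : |harmonicExt p Y h x| ≤ C :=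
  abs_tsum_mul_le (hitProb_nonneg hp x) (hrec.hasSum_hitProb x) fun y hy =>
    hbdd y (mem_of_hitProb_ne_zero hy)

lemma tsum_mul_harmonicExt (hp : IsMarkov p) (hrec : RecurrentSet p Y)
    (hbdd : ∀ y ∈ Y, |h y| ≤ C) (x : X) :
    ∑' z, p x z * harmonicExt p Y h z = ∑' y, inducedQ p Y x y * h y := by
  have hw : Summable fun zy : X × X => p x zy.1 * hitProb p Y zy.1 zy.2 :=
    summable_prod_mul_of_nonneg (hp.1 x) (hitProb_nonneg hp)
      (fun z => (hrec.hasSum_hitProb z).summable) <| by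
        simpa only [(hrec.hasSum_hitProb _).tsum_eq, mul_one] using (hp.2 x).summable
  have hs : Summable (Function.uncurry fun z y => p x z * (hitProb p Y z y * h y)) :=
    Summable.of_norm_bounded (hw.mul_right C) fun ⟨z, y⟩ => by
      rw [Real.norm_eq_abs, Function.uncurry_apply_pair, abs_mul, abs_of_nonneg (hp.1 x z),
        mul_assoc]
      exact mul_le_mul_of_nonneg_left (abs_mul_le_mul_of_abs_le (hitProb_nonneg hp z)
        (fun y hy => hbdd y (mem_of_hitProb_ne_zero hy)) y) (hp.1 x z)
  calc ∑' z, p x z * harmonicExt p Y h z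
      = ∑' z, ∑' y, p x z * (hitProb p Y z y * h y) := by
        simp_rw [harmonicExt_eq_tsum_hitProb, tsum_mul_left]
    _ = ∑' y, ∑' z, p x z * (hitProb p Y z y * h y) := hs.tsum_comm.symm
    _ = ∑' y, inducedQ p Y x y * h y := by
        simp_rw [← mul_assoc, tsum_mul_right, tsum_mul_hitProb hp]

end HarmonicExtension

theorem harmonic_extension_of_induced_harmonic_general
    (p : X → X → ℝ) (hp : IsMarkov p)
    (Y : Set X) (hrec : RecurrentSet p Y)
    (h : X → ℝ) (C : ℝ) (hbdd : ∀ y ∈ Y, |h y| ≤ C)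
    (hharm : ∀ x ∈ Y, h x = ∑' y, inducedQ p Y x y * h y) :
    (∀ x ∈ Y, harmonicExt p Y h x = h x) ∧
    (∀ x, |harmonicExt p Y h x| ≤ C) ∧
    (∀ x, harmonicExt p Y h x = ∑' y, p x y * harmonicExt p Y h y) := by
  refine ⟨fun x hx => harmonicExt_of_mem hx, abs_harmonicExt_le hp hrec hbdd, fun x => ?_⟩
  rw [tsum_mul_harmonicExt hp hrec hbdd]
  by_cases hx : x ∈ Y
  · rw [harmonicExt_of_mem hx, hharm x hx]
  · exact harmonicExt_of_notMem hx

/-- If `h` is a bounded harmonic function for the induced chain `Q` on a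
recurrent subset `Y`, then `h̃(x) = E_x[h(Z_{τ₀})]` is a bounded `P`-harmonic function on
`X` extending `h`, bounded by the same constant. -/
theorem harmonic_extension_of_induced_harmonic
    [Countable X] (p : X → X → ℝ) (hp : IsMarkov p)
    (Y : Set X) (hrec : RecurrentSet p Y)
    (h : X → ℝ) (C : ℝ) (hbdd : ∀ y ∈ Y, |h y| ≤ C)
    (hharm : ∀ x ∈ Y, h x = ∑' y, inducedQ p Y x y * h y) :
    (∀ x ∈ Y, harmonicExt p Y h x = h x) ∧
    (∀ x, |harmonicExt p Y h x| ≤ C) ∧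
    (∀ x, harmonicExt p Y h x = ∑' y, p x y * harmonicExt p Y h y) :=
  harmonic_extension_of_induced_harmonic_general p hp Y hrec h C hbdd hharm
end
end

section
/- Let (X,P) be a symmetric Markov chain on a countable set (p(x,y) = p(y,x) for all x,y), and let Y ⊆ X be a recurrent subset. Then the induced walk Q on Y, defined by q(x,y) = P_x(Z_{τ₁} = y), is also symmetric. -/
open scoped Classical

noncomputable section

variable {X : Type*}

/-! ### Auxiliary machinery for the symmetry of the induced chain -/

/-- Sum over paths of length `n` from `x` to `y` avoiding `Y` entirely (endpoints included). -/
noncomputable def avoidW (p : X → X → ℝ) (Y : Set X) : ℕ → X → X → ℝ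
  | 0, x, y => if x = y ∧ x ∉ Y then 1 else 0
  | n + 1, x, y => if x ∈ Y then 0 else ∑' z, p x z * avoidW p Y n z y

section Aux

variable {p : X → X → ℝ} {Y : Set X}

lemma summable_mul_row (hp : IsMarkov p) {g : X → ℝ} (x : X)
    (hg0 : ∀ z, 0 ≤ g z) (hg1 : ∀ z, g z ≤ 1) :
    Summable fun z => p x z * g z :=
  Summable.of_nonneg_of_le (fun z => mul_nonneg (hp.1 x z) (hg0 z))
    (fun z => mul_le_of_le_one_right (hp.1 x z) (hg1 z)) (hp.2 x).summable

lemma tsum_mul_row_le_one (hp : IsMarkov p) {g : X → ℝ} (x : X)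
    (hg0 : ∀ z, 0 ≤ g z) (hg1 : ∀ z, g z ≤ 1) :
    ∑' z, p x z * g z ≤ 1 := by
  calc ∑' z, p x z * g z ≤ ∑' z, p x z :=
        Summable.tsum_le_tsum (fun z => mul_le_of_le_one_right (hp.1 x z) (hg1 z))
          (summable_mul_row hp x hg0 hg1) (hp.2 x).summable
    _ = 1 := (hp.2 x).tsum_eq

lemma avoid_nonneg (hp : IsMarkov p) : ∀ n (x y : X), 0 ≤ avoidW p Y n x y := by
  intro n
  induction n with
  | zero => intro x y; simp only [avoidW]; split <;> norm_num
  | succ n ih =>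
    intro x y; simp only [avoidW]; split
    · exact le_refl 0
    · exact tsum_nonneg fun z => mul_nonneg (hp.1 _ _) (ih _ _)

lemma avoid_le_one (hp : IsMarkov p) : ∀ n (x y : X), avoidW p Y n x y ≤ 1 := by
  intro n
  induction n with
  | zero => intro x y; simp only [avoidW]; split <;> norm_num
  | succ n ih =>
    intro x y; simp only [avoidW]; split
    · norm_num
    · exact tsum_mul_row_le_one hp x (fun z => avoid_nonneg hp n z y) (fun z => ih z y)

lemma alpha_nonneg (hp : IsMarkov p) : ∀ n (x y : X), 0 ≤ alphaHit p Y n x y := by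
  intro n
  induction n with
  | zero => intro x y; simp only [alphaHit]; split <;> norm_num
  | succ n ih =>
    intro x y; simp only [alphaHit]; split
    · exact le_refl 0
    · exact tsum_nonneg fun z => mul_nonneg (hp.1 _ _) (ih _ _)

lemma alpha_le_one (hp : IsMarkov p) : ∀ n (x y : X), alphaHit p Y n x y ≤ 1 := by
  intro n
  induction n with
  | zero => intro x y; simp only [alphaHit]; split <;> norm_num
  | succ n ih =>
    intro x y; simp only [alphaHit]; split
    · norm_num
    · exact tsum_mul_row_le_one hp x (fun z => alpha_nonneg hp n z y) (fun z => ih z y)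

/-- Fubini for a doubly-indexed family dominated by a product of rows of `p`. -/
lemma tsum_comm_of_bound (hp : IsMarkov p) {F : X → X → ℝ} (a b : X)
    (h0 : ∀ z w, 0 ≤ F z w) (hle : ∀ z w, F z w ≤ p a z * p b w) :
    ∑' z, ∑' w, F z w = ∑' w, ∑' z, F z w := by
  have hsummul : ∀ z : X, Summable fun w => p a z * p b w :=
    fun z => (hp.2 b).summable.mul_left (p a z)
  have h1 : ∀ z, Summable (F z) :=
    fun z => Summable.of_nonneg_of_le (h0 z) (hle z) (hsummul z)
  have h2 : ∀ w, Summable fun z => F z w := fun w =>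
    Summable.of_nonneg_of_le (fun z => h0 z w) (fun z => hle z w)
      ((hp.2 a).summable.mul_right (p b w))
  have hsum : Summable (Function.uncurry F) := by
    refine (summable_prod_of_nonneg (fun q => h0 q.1 q.2)).2 ⟨h1, ?_⟩
    refine Summable.of_nonneg_of_le (fun z => tsum_nonneg (h0 z)) (fun z => ?_)
      (hp.2 a).summable
    calc ∑' w, F z w ≤ ∑' w, p a z * p b w := Summable.tsum_le_tsum (hle z) (h1 z) (hsummul z)
      _ = p a z * ∑' w, p b w := tsum_mul_left
      _ = p a z := by rw [(hp.2 b).tsum_eq, mul_one]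
  exact (Summable.tsum_comm' hsum h1 h2).symm

lemma avoid_succ_right (hp : IsMarkov p) (hsymm : ∀ x y, p x y = p y x) :
    ∀ n (x y : X), avoidW p Y (n + 1) x y =
      if y ∈ Y then 0 else ∑' z, avoidW p Y n x z * p z y := by
  intro n
  induction n with
  | zero =>
    intro x y
    have hL : avoidW p Y 1 x y = if x ∈ Y then 0 else if y ∈ Y then 0 else p x y := by
      simp only [avoidW]
      split
      · rfl
      · have : (fun z => p x z * (if z = y ∧ z ∉ Y then 1 else 0)) =
            fun z => if z = y then (if y ∈ Y then 0 else p x y) else 0 := by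
          funext z
          by_cases hz : z = y
          · subst hz; by_cases hzY : z ∈ Y <;> simp [hzY]
          · simp [hz]
        rw [this, tsum_ite_eq]
    have hR : (fun z => (avoidW p Y 0 x z) * p z y) =
        fun z => if z = x then (if x ∈ Y then 0 else p x y) else 0 := by
      funext z
      simp only [avoidW]
      by_cases hz : z = x
      · subst hz; by_cases hzY : z ∈ Y <;> simp [hzY]
      · have h1 : ¬ (x = z ∧ x ∉ Y) := fun h => hz h.1.symm
        simp [hz, h1]
    rw [hL, hR]
    by_cases hx : x ∈ Y <;> by_cases hy : y ∈ Y <;> simp [hx, hy, tsum_ite_eq]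
  | succ n ih =>
    intro x y
    by_cases hy : y ∈ Y
    · simp only [hy, if_true]
      show (if x ∈ Y then 0 else ∑' z, p x z * avoidW p Y (n + 1) z y) = 0
      split
      · rfl
      · have : (fun z => p x z * avoidW p Y (n + 1) z y) = fun _ => 0 := by
          funext z; rw [ih z y]; simp [hy]
        rw [this, tsum_zero]
    · simp only [hy, if_false]
      by_cases hx : x ∈ Y
      · have hL : avoidW p Y (n + 1 + 1) x y = 0 := by simp [avoidW, hx]
        have hR : (fun z => avoidW p Y (n + 1) x z * p z y) = fun _ => 0 := by
          funext z; simp [avoidW, hx]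
        rw [hL, hR, tsum_zero]
      · have hL : avoidW p Y (n + 1 + 1) x y =
            ∑' z, ∑' w, p x z * (avoidW p Y n z w * p w y) := by
          show (if x ∈ Y then 0 else ∑' z, p x z * avoidW p Y (n + 1) z y) = _
          rw [if_neg hx]
          refine tsum_congr fun z => ?_
          rw [ih z y, if_neg hy, ← tsum_mul_left]
        have hR : (∑' w, avoidW p Y (n + 1) x w * p w y) =
            ∑' w, ∑' z, p x z * (avoidW p Y n z w * p w y) := by
          refine tsum_congr fun w => ?_
          have : avoidW p Y (n + 1) x w = ∑' z, p x z * avoidW p Y n z w := by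
            simp [avoidW, hx]
          rw [this, ← tsum_mul_right]
          exact tsum_congr fun z => by ring
        rw [hL, hR]
        refine tsum_comm_of_bound hp x y (fun z w => ?_) (fun z w => ?_)
        · exact mul_nonneg (hp.1 _ _) (mul_nonneg (avoid_nonneg hp _ _ _) (hp.1 _ _))
        · rw [hsymm y w]
          refine mul_le_mul_of_nonneg_left ?_ (hp.1 x z)
          exact mul_le_of_le_one_left (hp.1 w y) (avoid_le_one hp n z w)

lemma avoid_symm (hp : IsMarkov p) (hsymm : ∀ x y, p x y = p y x) :
    ∀ n (x y : X), avoidW p Y n x y = avoidW p Y n y x := by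
  intro n
  induction n with
  | zero =>
    intro x y
    have h : (x = y ∧ x ∉ Y) ↔ (y = x ∧ y ∉ Y) := by
      constructor <;> rintro ⟨rfl, h⟩ <;> exact ⟨rfl, h⟩
    simp only [avoidW, h]
  | succ n ih =>
    intro x y
    rw [avoid_succ_right hp hsymm n x y]
    show _ = (if y ∈ Y then (0:ℝ) else ∑' z, p y z * avoidW p Y n z x)
    by_cases hy : y ∈ Y
    · simp [hy]
    · simp only [hy, if_false]
      exact tsum_congr fun z => by rw [ih x z, hsymm z y, mul_comm]

lemma alpha_eq_avoid (hp : IsMarkov p) (hsymm : ∀ x y, p x y = p y x) {y : X} (hy : y ∈ Y) :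
    ∀ n (z : X), alphaHit p Y (n + 1) z y = ∑' w, avoidW p Y n z w * p w y := by
  intro n
  induction n with
  | zero =>
    intro z
    have hL : alphaHit p Y 1 z y = if z ∈ Y then 0 else p z y := by
      simp only [alphaHit]
      split
      · rfl
      · have : (fun w => p z w * (if w = y ∧ w ∈ Y then 1 else 0)) =
            fun w => if w = y then p z y else 0 := by
          funext w
          by_cases hw : w = y
          · subst hw; simp [hy]
          · simp [hw]
        rw [this, tsum_ite_eq]
    have hR : (fun w => avoidW p Y 0 z w * p w y) =
        fun w => if w = z then (if z ∈ Y then 0 else p z y) else 0 := by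
      funext w
      simp only [avoidW]
      by_cases hw : w = z
      · subst hw; by_cases hwY : w ∈ Y <;> simp [hwY]
      · have h1 : ¬ (z = w ∧ z ∉ Y) := fun h => hw h.1.symm
        simp [h1, hw]
    rw [hL, hR, tsum_ite_eq]
  | succ n ih =>
    intro z
    by_cases hz : z ∈ Y
    · have hL : alphaHit p Y (n + 1 + 1) z y = 0 := by simp [alphaHit, hz]
      have hR : (fun w => avoidW p Y (n + 1) z w * p w y) = fun _ => 0 := by
        funext w; simp [avoidW, hz]
      rw [hL, hR, tsum_zero]
    · have hL : alphaHit p Y (n + 1 + 1) z y =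
          ∑' w, ∑' u, p z w * (avoidW p Y n w u * p u y) := by
        show (if z ∈ Y then 0 else ∑' w, p z w * alphaHit p Y (n + 1) w y) = _
        rw [if_neg hz]
        refine tsum_congr fun w => ?_
        rw [ih w, ← tsum_mul_left]
      have hR : (∑' w, avoidW p Y (n + 1) z w * p w y) =
          ∑' u, ∑' w, p z w * (avoidW p Y n w u * p u y) := by
        refine tsum_congr fun u => ?_
        have : avoidW p Y (n + 1) z u = ∑' w, p z w * avoidW p Y n w u := by
          simp [avoidW, hz]
        rw [this, ← tsum_mul_right]
        exact tsum_congr fun w => by ring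
      rw [hL, hR]
      refine tsum_comm_of_bound hp z y (fun w u => ?_) (fun w u => ?_)
      · exact mul_nonneg (hp.1 _ _) (mul_nonneg (avoid_nonneg hp _ _ _) (hp.1 _ _))
      · rw [hsymm y u]
        refine mul_le_mul_of_nonneg_left ?_ (hp.1 z w)
        exact mul_le_of_le_one_left (hp.1 u y) (avoid_le_one hp n w u)

lemma firstHit_symm (hp : IsMarkov p) (hsymm : ∀ x y, p x y = p y x)
    {x y : X} (hx : x ∈ Y) (hy : y ∈ Y) (n : ℕ) :
    firstHit p Y n x y = firstHit p Y n y x := by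
  cases n with
  | zero =>
    have key : ∀ a b : X, b ∈ Y → firstHit p Y 0 a b = p a b := by
      intro a b hb
      show (∑' z, p a z * alphaHit p Y 0 z b) = p a b
      have : (fun z => p a z * alphaHit p Y 0 z b) =
          fun z => if z = b then p a b else 0 := by
        funext z
        simp only [alphaHit]
        by_cases hz : z = b
        · subst hz; simp [hb]
        · simp [hz]
      rw [this, tsum_ite_eq]
    rw [key x y hy, key y x hx, hsymm]
  | succ n =>
    have key : ∀ a b : X, b ∈ Y → firstHit p Y (n + 1) a b =
        ∑' z, ∑' w, p a z * (avoidW p Y n z w * p w b) := by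
      intro a b hb
      show (∑' z, p a z * alphaHit p Y (n + 1) z b) = _
      refine tsum_congr fun z => ?_
      rw [alpha_eq_avoid hp hsymm hb n z, ← tsum_mul_left]
    rw [key x y hy, key y x hx]
    have := tsum_comm_of_bound hp (F := fun z w => p x z * (avoidW p Y n z w * p w y)) x y
      (fun z w => mul_nonneg (hp.1 _ _) (mul_nonneg (avoid_nonneg hp _ _ _) (hp.1 _ _)))
      (fun z w => by
        rw [hsymm y w]
        refine mul_le_mul_of_nonneg_left ?_ (hp.1 x z)
        exact mul_le_of_le_one_left (hp.1 w y) (avoid_le_one hp n z w))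
    rw [this]
    refine tsum_congr fun w => tsum_congr fun z => ?_
    rw [avoid_symm hp hsymm n z w, hsymm x z, hsymm w y]
    ring

end Aux

/-- If the chain `P` is symmetric, then the induced chain `Q` on a
recurrent subset `Y` is symmetric as well. -/
theorem induced_chain_symmetric
    [Countable X] (p : X → X → ℝ) (hp : IsMarkov p)
    (hsymm : ∀ x y, p x y = p y x)
    (Y : Set X) (hrec : RecurrentSet p Y) :
    ∀ x ∈ Y, ∀ y ∈ Y, inducedQ p Y x y = inducedQ p Y y x := by
  intro x hx y hy
  exact tsum_congr fun n => firstHit_symm hp hsymm hx hy n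

end
end

section
/- Let 𝒩 = (X,a) be an irreducible network on a countable set X and Γ ≤ Aut(𝒩) a group of automorphisms preserving the conductance a, with all vertex stabilizers Γ_x finite. Define a'(x̄,ȳ) on Γ\X by a'(x̄,ȳ) = (1/|Γ_x|) Σ_{y' ∈ π^{-1}(ȳ)} a(x,y'), where x is any lift of x̄ and π : X → Γ\X the projection. Then a' is well-defined (independent of the lift), symmetric, and has finite positive total conductance at every point; i.e. (Γ\X, a') is a network. -/
open scoped Classical
open scoped ENNReal

noncomputable section

variable {X : Type*} {Γ : Type*}

section MyAux

variable [Group Γ] [MulAction Γ X]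

private lemma pi_eq_iff (b y : X) :
    Quotient.mk (MulAction.orbitRel Γ X) b = Quotient.mk (MulAction.orbitRel Γ X) y ↔
      ∃ γ : Γ, γ • y = b := by
  constructor
  · intro h
    have := Quotient.exact h
    exact MulAction.mem_orbit_iff.mp ((MulAction.orbitRel_apply).mp this)
  · rintro ⟨γ, rfl⟩
    exact Quotient.sound ((MulAction.orbitRel_apply).mpr (MulAction.mem_orbit y γ))

private def fiberEquiv (y b : X) (γ₀ : Γ) (h₀ : γ₀ • y = b) :
    {γ : Γ // γ • y = b} ≃ MulAction.stabilizer Γ y where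
  toFun γ := ⟨γ₀⁻¹ * γ.1, by
    rw [MulAction.mem_stabilizer_iff, mul_smul, γ.2, ← h₀, inv_smul_smul]⟩
  invFun h := ⟨γ₀ * h.1, by
    rw [mul_smul, (MulAction.mem_stabilizer_iff).mp h.2, h₀]⟩
  left_inv γ := by simp
  right_inv h := by simp

private lemma fiber_finite (hstab : ∀ x : X, Finite (MulAction.stabilizer Γ x))
    (y b : X) : Finite {γ : Γ // γ • y = b} := by
  by_cases h : ∃ γ₀ : Γ, γ₀ • y = b
  · obtain ⟨γ₀, h₀⟩ := h
    haveI := hstab y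
    exact Finite.of_equiv _ (fiberEquiv y b γ₀ h₀).symm
  · have : IsEmpty {γ : Γ // γ • y = b} := ⟨fun γ => h ⟨γ.1, γ.2⟩⟩
    exact Finite.of_subsingleton

private lemma fiber_card (hstab : ∀ x : X, Finite (MulAction.stabilizer Γ x)) (y b : X) :
    (Nat.card {γ : Γ // γ • y = b} : ℝ≥0∞) =
      if Quotient.mk (MulAction.orbitRel Γ X) b = Quotient.mk (MulAction.orbitRel Γ X) y
        then (Nat.card (MulAction.stabilizer Γ y) : ℝ≥0∞) else 0 := by
  by_cases h : ∃ γ₀ : Γ, γ₀ • y = b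
  · obtain ⟨γ₀, h₀⟩ := h
    rw [if_pos ((pi_eq_iff b y).mpr ⟨γ₀, h₀⟩), Nat.card_congr (fiberEquiv y b γ₀ h₀)]
  · have he : IsEmpty {γ : Γ // γ • y = b} := ⟨fun γ => h ⟨γ.1, γ.2⟩⟩
    rw [if_neg (fun hq => h ((pi_eq_iff b y).mp hq)), Nat.card_of_isEmpty]
    simp

/-- Key mass-transport identity, in `ℝ≥0∞`. -/
private lemma key (hstab : ∀ x : X, Finite (MulAction.stabilizer Γ x))
    (F : X → ℝ≥0∞) (y : X) :
    ∑' γ : Γ, F (γ • y) =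
      (Nat.card (MulAction.stabilizer Γ y) : ℝ≥0∞) *
        ∑' b, (if Quotient.mk (MulAction.orbitRel Γ X) b = Quotient.mk (MulAction.orbitRel Γ X) y
              then F b else 0) := by
  rw [← ENNReal.tsum_mul_left]
  rw [← (Equiv.sigmaFiberEquiv (fun γ : Γ => γ • y)).tsum_eq (fun γ => F (γ • y))]
  rw [ENNReal.tsum_sigma' (fun p => F ((Equiv.sigmaFiberEquiv (fun γ : Γ => γ • y)) p • y))]
  refine tsum_congr fun b => ?_
  have h1 : ∀ γ : {γ : Γ // γ • y = b},
      F ((Equiv.sigmaFiberEquiv (fun γ : Γ => γ • y)) ⟨b, γ⟩ • y) = F b := by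
    intro γ
    simp [Equiv.sigmaFiberEquiv, γ.2]
  rw [tsum_congr h1]
  haveI := fiber_finite hstab y b
  haveI := Fintype.ofFinite {γ : Γ // γ • y = b}
  rw [tsum_fintype, Finset.sum_const, Finset.card_univ, nsmul_eq_mul,
    ← Nat.card_eq_fintype_card, fiber_card hstab y b]
  split_ifs <;> simp

end MyAux

/-- `(X, a)` is a network: `a` is symmetric nonnegative and every total conductance
`m(x) = Σ_y a(x,y)` is finite and positive. -/
def IsNetwork (a : X → X → ℝ) : Prop :=
  (∀ x y, 0 ≤ a x y) ∧ (∀ x y, a x y = a y x) ∧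
    (∀ x, Summable (a x)) ∧ (∀ x, 0 < ∑' y, a x y)

/-- The Markov chain associated to a network: `p(x,y) = a(x,y)/m(x)`. -/
noncomputable def networkChain (a : X → X → ℝ) (x y : X) : ℝ :=
  a x y / ∑' z, a x z

/-- The quotient conductance on `Γ\X`, computed at a lift `x`:
`a'(x̄, c) = (1/|Γ_x|) · Σ_{y' ∈ π⁻¹(c)} a(x, y')`. -/
noncomputable def quotCond [Group Γ] [MulAction Γ X] (a : X → X → ℝ)
    (x : X) (c : Quotient (MulAction.orbitRel Γ X)) : ℝ :=
  (Nat.card (MulAction.stabilizer Γ x) : ℝ)⁻¹ *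
    ∑' y, if Quotient.mk (MulAction.orbitRel Γ X) y = c then a x y else 0

/-- For an irreducible network `(X,a)` with a conductance-preserving action
of `Γ` with finite vertex stabilizers, the quotient conductance `a'` is well defined
(independent of the choice of lift), symmetric, and has finite positive total conductance at
every point; i.e. `(Γ\X, a')` is a network. -/
theorem quotient_network_is_network
    [Countable X] [Group Γ] [MulAction Γ X]
    (a : X → X → ℝ) (hnet : IsNetwork a)
    (hirr : ChainIrreducible (networkChain a))
    (hinv : ∀ (γ : Γ) (x y : X), a (γ • x) (γ • y) = a x y)
    (hstab : ∀ x : X, Finite (MulAction.stabilizer Γ x)) :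
    (∀ x x' : X, Quotient.mk (MulAction.orbitRel Γ X) x = Quotient.mk (MulAction.orbitRel Γ X) x' →
      ∀ c, quotCond (Γ := Γ) a x c = quotCond (Γ := Γ) a x' c) ∧
    (∀ x y : X, quotCond (Γ := Γ) a x (Quotient.mk (MulAction.orbitRel Γ X) y)
      = quotCond (Γ := Γ) a y (Quotient.mk (MulAction.orbitRel Γ X) x)) ∧
    (∀ x : X, Summable (fun c : Quotient (MulAction.orbitRel Γ X) => quotCond (Γ := Γ) a x c) ∧
      0 < ∑' c : Quotient (MulAction.orbitRel Γ X), quotCond (Γ := Γ) a x c) := by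
  obtain ⟨hpos, hsymm, hsum, hm⟩ := hnet
  set π : X → Quotient (MulAction.orbitRel Γ X) := Quotient.mk (MulAction.orbitRel Γ X) with hπ
  set A : X → X → ℝ≥0∞ := fun x y => ENNReal.ofReal (a x y) with hA
  set Sr : X → Quotient (MulAction.orbitRel Γ X) → ℝ :=
    fun x c => ∑' y, if π y = c then a x y else 0 with hSr
  set SE : X → Quotient (MulAction.orbitRel Γ X) → ℝ≥0∞ :=
    fun x c => ∑' y, if π y = c then A x y else 0 with hSE
  -- summability of the fiber sums
  have hsumfib : ∀ x c, Summable (fun y => if π y = c then a x y else 0) := by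
    intro x c
    refine Summable.of_nonneg_of_le (fun y => ?_) (fun y => ?_) (hsum x)
    · split_ifs with h; exacts [hpos x y, le_rfl]
    · split_ifs with h; exacts [le_rfl, hpos x y]
  have hSrnn : ∀ x c, 0 ≤ Sr x c := fun x c =>
    tsum_nonneg (fun y => by split_ifs; exacts [hpos x y, le_rfl])
  have hofReal : ∀ x c, ENNReal.ofReal (Sr x c) = SE x c := by
    intro x c
    rw [hSr, ENNReal.ofReal_tsum_of_nonneg
      (fun y => by split_ifs; exacts [hpos x y, le_rfl]) (hsumfib x c)]
    refine tsum_congr fun y => ?_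
    split_ifs <;> simp [hA]
  have hcardpos : ∀ x : X, (0 : ℝ) < (Nat.card (MulAction.stabilizer Γ x) : ℝ) := by
    intro x
    haveI := hstab x
    exact_mod_cast Nat.card_pos
  -- symmetry in ℝ≥0∞
  have hkey : ∀ x y : X,
      (Nat.card (MulAction.stabilizer Γ y) : ℝ≥0∞) * SE x (π y)
        = (Nat.card (MulAction.stabilizer Γ x) : ℝ≥0∞) * SE y (π x) := by
    intro x y
    have e1 : ∑' γ : Γ, A x (γ • y)
        = (Nat.card (MulAction.stabilizer Γ y) : ℝ≥0∞) * SE x (π y) :=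
      key hstab (fun b => A x b) y
    have e2 : ∑' γ : Γ, A x (γ • y) = ∑' γ : Γ, A (γ • x) y := by
      have e2a : ∀ γ : Γ, A x (γ • y) = A (γ⁻¹ • x) y := by
        intro γ
        have h1 : a (γ • (γ⁻¹ • x)) (γ • y) = a (γ⁻¹ • x) y := hinv γ (γ⁻¹ • x) y
        rw [smul_inv_smul] at h1
        simp only [hA, h1]
      rw [tsum_congr e2a]
      exact (Equiv.inv Γ).tsum_eq (fun γ => A (γ • x) y)
    have e3 : ∑' γ : Γ, A (γ • x) y
        = (Nat.card (MulAction.stabilizer Γ x) : ℝ≥0∞) * SE y (π x) := by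
      have := key hstab (fun b => A b y) x
      rw [this]
      congr 1
      refine tsum_congr fun b => ?_
      split_ifs with h
      · simp only [hA]; rw [hsymm b y]
      · rfl
    rw [← e1, e2, e3]
  have hSEfin : ∀ x c, SE x c ≠ ⊤ := by
    intro x c
    rw [← hofReal]
    exact ENNReal.ofReal_ne_top
  -- real symmetry
  have hsymQ : ∀ x y : X, quotCond (Γ := Γ) a x (π y) = quotCond (Γ := Γ) a y (π x) := by
    intro x y
    have h := hkey x y
    rw [← hofReal, ← hofReal, ← ENNReal.ofReal_natCast, ← ENNReal.ofReal_natCast,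
      ← ENNReal.ofReal_mul (by positivity), ← ENNReal.ofReal_mul (by positivity)] at h
    have h' : (Nat.card (MulAction.stabilizer Γ y) : ℝ) * Sr x (π y)
        = (Nat.card (MulAction.stabilizer Γ x) : ℝ) * Sr y (π x) :=
      (ENNReal.ofReal_eq_ofReal_iff
        (mul_nonneg (by positivity) (hSrnn x _))
        (mul_nonneg (by positivity) (hSrnn y _))).mp h
    show (Nat.card (MulAction.stabilizer Γ x) : ℝ)⁻¹ * Sr x (π y)
        = (Nat.card (MulAction.stabilizer Γ y) : ℝ)⁻¹ * Sr y (π x)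
    have hx := hcardpos x
    have hy := hcardpos y
    rw [inv_mul_eq_div, inv_mul_eq_div, div_eq_div_iff hx.ne' hy.ne']
    linear_combination h' 
  -- total sum over classes
  have htot : ∀ x : X, ∑' c, SE x c = ENNReal.ofReal (∑' y, a x y) := by
    intro x
    rw [ENNReal.ofReal_tsum_of_nonneg (fun y => hpos x y) (hsum x)]
    rw [hSE]
    simp only []
    rw [ENNReal.tsum_comm]
    refine tsum_congr fun y => ?_
    simp only [hA]
    rw [tsum_eq_single (π y) (fun c hc => if_neg (fun h => hc h.symm))]
    exact if_pos rfl
  have htotne : ∀ x : X, ∑' c, SE x c ≠ ⊤ := fun x => by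
    rw [htot x]; exact ENNReal.ofReal_ne_top
  have hSrSummable : ∀ x : X, Summable (fun c => Sr x c) := by
    intro x
    have := ENNReal.summable_toReal (htotne x)
    refine this.congr fun c => ?_
    rw [← hofReal, ENNReal.toReal_ofReal (hSrnn x c)]
  have hSrtot : ∀ x : X, ∑' c, Sr x c = ∑' y, a x y := by
    intro x
    have h1 : ∑' c, Sr x c = (∑' c, SE x c).toReal := by
      rw [ENNReal.tsum_toReal_eq (fun c => hSEfin x c)]
      refine tsum_congr fun c => ?_
      rw [← hofReal, ENNReal.toReal_ofReal (hSrnn x c)]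
    rw [h1, htot x, ENNReal.toReal_ofReal (le_of_lt (hm x))]
  refine ⟨?_, ?_, ?_⟩
  · intro x x' hxx' c
    obtain ⟨y, rfl⟩ := Quotient.exists_rep c
    calc quotCond (Γ := Γ) a x (π y) = quotCond (Γ := Γ) a y (π x) := hsymQ x y
    _ = quotCond (Γ := Γ) a y (π x') := by rw [hπ] at hxx' ⊢; rw [hxx']
    _ = quotCond (Γ := Γ) a x' (π y) := (hsymQ x' y).symm
  · exact hsymQ
  · intro x
    constructor
    · have := (hSrSummable x).mul_left ((Nat.card (MulAction.stabilizer Γ x) : ℝ)⁻¹)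
      exact this.congr fun c => rfl
    · have h1 : ∑' c, quotCond (Γ := Γ) a x c
          = (Nat.card (MulAction.stabilizer Γ x) : ℝ)⁻¹ * ∑' c, Sr x c := by
        rw [← tsum_mul_left]
        exact tsum_congr fun c => rfl
      rw [h1, hSrtot x]
      exact mul_pos (inv_pos.mpr (hcardpos x)) (hm x)

end
end

section
/- Let 𝒩 = (X,a) be an irreducible network with associated random walk P, and Γ ≤ Aut(X,P) with all stabilizers |Γ_x| finite, such that for some fundamental domain D of Γ\X one has Σ_{x∈D} m(x)/|Γ_x| < ∞, where m is the total conductance. Then for any o ∈ X, the random walk on X started at any point meets the orbit Γ·o infinitely often almost surely. -/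
open scoped Classical

noncomputable section

variable {X : Type*} {Γ : Type*}

/-- Distribution of the position of the walk at the `k`-th visit time `τ_k` of `Y`. -/
noncomputable def visitDist (p : X → X → ℝ) (Y : Set X) : ℕ → X → X → ℝ
  | 0, x, y => ∑' n, alphaHit p Y n x y
  | k + 1, x, y => (∑' z, visitDist p Y k x z * inducedQ p Y z y : ℝ)

/-- A fundamental domain for the `Γ`-action: a set meeting every orbit exactly once. -/
def IsFundDomain [Group Γ] [MulAction Γ X] (D : Set X) : Prop :=
  ∀ x : X, ∃! d, d ∈ D ∧ x ∈ MulAction.orbit Γ d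


/-! Let `u x` be the probability that the walk from `x` ever visits the orbit `Γ•o`. Then
`v = 1 - u` is `Γ`-invariant, bounded and subharmonic (`v ≤ P v`). By the mass transport
principle, `d ↦ m(d)/|Γ_d|` on the fundamental domain is a finite stationary measure for
`Γ`-invariant functions, so `∑_D μ (P v - v) = 0` forces `P v = v`. As `v o = 0`, irreducibility
gives `v = 0`: the orbit is reached almost surely from everywhere, and then each successive visit
time is almost surely finite as well. -/

open scoped ENNReal

namespace MulAction

variable [Group Γ] [MulAction Γ X]

theorem orbitProdStabilizerEquivGroup_smul (b : X) (p : orbit Γ b × stabilizer Γ b) :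
    orbitProdStabilizerEquivGroup Γ b p • b = p.1 := by
  have hmk : (orbitProdStabilizerEquivGroup Γ b p : Γ ⧸ stabilizer Γ b) =
      orbitEquivQuotientStabilizer Γ b p.1 :=
    congrArg Prod.fst (Subgroup.groupEquivQuotientProdSubgroup.apply_symm_apply (_, p.2))
  simpa using congrArg Subtype.val (congrArg (orbitEquivQuotientStabilizer Γ b).symm hmk)

theorem tsum_smul_eq_card_stabilizer_mul (b : X) [Finite (stabilizer Γ b)] (g : X → ℝ≥0∞) :
    ∑' γ : Γ, g (γ • b) = Nat.card (stabilizer Γ b) * ∑' z : orbit Γ b, g z := by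
  rw [← (orbitProdStabilizerEquivGroup Γ b).tsum_eq]
  simp only [orbitProdStabilizerEquivGroup_smul]
  rw [ENNReal.tsum_prod (f := fun (z : orbit Γ b) _ => g z), ← ENNReal.tsum_mul_left]
  simp only [ENNReal.tsum_const, ENat.card_eq_coe_natCard, mul_comm]
  rfl

end MulAction

namespace IsFundDomain

open MulAction

variable [Group Γ] [MulAction Γ X] {D : Set X}

noncomputable def sigmaOrbitEquiv (hD : IsFundDomain (Γ := Γ) D) :
    (Σ d : D, orbit Γ (d : X)) ≃ X :=
  Equiv.ofBijective (fun s => s.2) <| by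
    refine ⟨?_, fun x => ?_⟩
    · rintro ⟨⟨d₁, hd₁⟩, x, hx₁⟩ ⟨⟨d₂, hd₂⟩, _, hx₂⟩ rfl
      obtain rfl : d₁ = d₂ := (hD x).unique ⟨hd₁, hx₁⟩ ⟨hd₂, hx₂⟩
      rfl
    · obtain ⟨d, ⟨hd, hx⟩, -⟩ := hD x
      exact ⟨⟨⟨d, hd⟩, ⟨x, hx⟩⟩, rfl⟩

theorem tsum_eq (hD : IsFundDomain (Γ := Γ) D) (hstab : ∀ x : X, Finite (stabilizer Γ x))
    (g : X → ℝ≥0∞) :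
    ∑' x, g x =
      ∑' d : D, (Nat.card (stabilizer Γ (d : X)) : ℝ≥0∞)⁻¹ * ∑' γ : Γ, g (γ • (d : X)) := by
  rw [← hD.sigmaOrbitEquiv.tsum_eq, ENNReal.tsum_sigma']
  refine tsum_congr fun d => ?_
  have := hstab (d : X)
  rw [tsum_smul_eq_card_stabilizer_mul, ← mul_assoc, ENNReal.inv_mul_cancel
    (Nat.cast_ne_zero.2 Nat.card_pos.ne') (ENNReal.natCast_ne_top _), one_mul]
  rfl

theorem tsum_mass_transport (hD : IsFundDomain (Γ := Γ) D)
    (hstab : ∀ x : X, Finite (stabilizer Γ x)) {F : X → X → ℝ≥0∞}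
    (hF : ∀ (γ : Γ) x y, F (γ • x) (γ • y) = F x y) :
    ∑' d : D, (Nat.card (stabilizer Γ (d : X)) : ℝ≥0∞)⁻¹ * ∑' z, F d z =
      ∑' d : D, (Nat.card (stabilizer Γ (d : X)) : ℝ≥0∞)⁻¹ * ∑' z, F z d := by
  have hswap : ∀ x y : X, ∑' γ : Γ, F x (γ • y) = ∑' γ : Γ, F (γ • x) y := fun x y => by
    rw [← (Equiv.inv Γ).tsum_eq]
    refine tsum_congr fun γ => ?_
    rw [← hF γ, Equiv.inv_apply, smul_inv_smul]
  simp_rw [hD.tsum_eq hstab (F _), hD.tsum_eq hstab (F · _), hswap, ← ENNReal.tsum_mul_left]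
  rw [ENNReal.tsum_comm]
  simp_rw [mul_left_comm]

end IsFundDomain

/- `ℝ≥0∞`-valued copies of `alphaHit`, `inducedQ` and `visitDist`, in which every series
converges; the real ones are their `toReal` (`visitDist_eq_toReal`). -/

noncomputable def alphaHitE (q : X → X → ℝ≥0∞) (Y : Set X) : ℕ → X → X → ℝ≥0∞
  | 0, x, y => if x = y ∧ x ∈ Y then 1 else 0
  | n + 1, x, y => if x ∈ Y then 0 else ∑' z, q x z * alphaHitE q Y n z y

noncomputable def hitAtE (q : X → X → ℝ≥0∞) (Y : Set X) (n : ℕ) (x : X) : ℝ≥0∞ :=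
  ∑' y, alphaHitE q Y n x y

/-- The probability that the walk from `x` visits `Y` at some time `n ≥ 0`. -/
noncomputable def hitProbE (q : X → X → ℝ≥0∞) (Y : Set X) (x : X) : ℝ≥0∞ :=
  ∑' n, hitAtE q Y n x

noncomputable def inducedQE (q : X → X → ℝ≥0∞) (Y : Set X) (x y : X) : ℝ≥0∞ :=
  ∑' n, ∑' z, q x z * alphaHitE q Y n z y

noncomputable def visitDistE (q : X → X → ℝ≥0∞) (Y : Set X) : ℕ → X → X → ℝ≥0∞
  | 0, x, y => ∑' n, alphaHitE q Y n x y
  | k + 1, x, y => ∑' z, visitDistE q Y k x z * inducedQE q Y z y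

section FirstEntrance

variable {q : X → X → ℝ≥0∞} {Y : Set X}

theorem hitAtE_zero (x : X) : hitAtE q Y 0 x = if x ∈ Y then 1 else 0 := by
  simp only [hitAtE, alphaHitE, and_comm (a := _ = _), ite_and]
  split_ifs <;> simp

theorem hitAtE_succ (n : ℕ) (x : X) :
    hitAtE q Y (n + 1) x = if x ∈ Y then 0 else ∑' z, q x z * hitAtE q Y n z := by
  simp only [hitAtE, alphaHitE]
  split_ifs
  · simp
  · rw [ENNReal.tsum_comm]
    simp_rw [ENNReal.tsum_mul_left]

theorem sum_range_hitAtE_le_one (hq : ∀ x, ∑' y, q x y ≤ 1) (N : ℕ) (x : X) :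
    ∑ n ∈ Finset.range N, hitAtE q Y n x ≤ 1 := by
  induction N generalizing x with
  | zero => simp
  | succ N ih =>
    rw [Finset.sum_range_succ']
    by_cases hx : x ∈ Y
    · simp [hitAtE_succ, hitAtE_zero, hx]
    · calc ∑ n ∈ Finset.range N, hitAtE q Y (n + 1) x + hitAtE q Y 0 x
          = ∑' z, q x z * ∑ n ∈ Finset.range N, hitAtE q Y n z := by
            simp only [hitAtE_succ, hitAtE_zero, hx, if_false, add_zero, Finset.mul_sum]
            exact (Summable.tsum_finsetSum fun _ _ => ENNReal.summable).symm
        _ ≤ ∑' z, q x z * 1 := by gcongr with z; exact ih z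
        _ ≤ 1 := by simpa using hq x

theorem hitProbE_le_one (hq : ∀ x, ∑' y, q x y ≤ 1) (x : X) : hitProbE q Y x ≤ 1 := by
  rw [hitProbE, ENNReal.tsum_eq_iSup_nat]
  exact iSup_le fun N => sum_range_hitAtE_le_one hq N x

theorem alphaHitE_le_one (hq : ∀ x, ∑' y, q x y ≤ 1) (n : ℕ) (x y : X) :
    alphaHitE q Y n x y ≤ 1 :=
  calc alphaHitE q Y n x y ≤ hitAtE q Y n x := ENNReal.le_tsum y
    _ ≤ hitProbE q Y x := ENNReal.le_tsum n
    _ ≤ 1 := hitProbE_le_one hq x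

theorem hitProbE_of_mem {x : X} (hx : x ∈ Y) : hitProbE q Y x = 1 := by
  rw [hitProbE, tsum_eq_zero_add' ENNReal.summable]
  simp [hitAtE_zero, hitAtE_succ, hx]

theorem hitProbE_of_notMem {x : X} (hx : x ∉ Y) :
    hitProbE q Y x = ∑' z, q x z * hitProbE q Y z := by
  rw [hitProbE, tsum_eq_zero_add' ENNReal.summable]
  simp only [hitAtE_zero, hitAtE_succ, hx, if_false, zero_add, hitProbE, ← ENNReal.tsum_mul_left]
  exact ENNReal.tsum_comm

theorem hitProbE_equiv (e : X ≃ X) (hqe : ∀ x y, q (e x) (e y) = q x y)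
    (hYe : ∀ x, e x ∈ Y ↔ x ∈ Y) (x : X) : hitProbE q Y (e x) = hitProbE q Y x := by
  suffices h : ∀ n x, hitAtE q Y n (e x) = hitAtE q Y n x from tsum_congr fun n => h n x
  intro n
  induction n with
  | zero => simp [hitAtE_zero, hYe]
  | succ n ih =>
    intro x
    simp only [hitAtE_succ, hYe, ← e.tsum_eq (fun z => q (e x) z * hitAtE q Y n z), hqe, ih]

theorem one_sub_hitProbE_le (hq : ∀ x, ∑' y, q x y = 1) (x : X) :
    1 - hitProbE q Y x ≤ ∑' z, q x z * (1 - hitProbE q Y z) := by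
  by_cases hx : x ∈ Y
  · simp [hitProbE_of_mem hx]
  rw [hitProbE_of_notMem hx, tsub_le_iff_right, ← ENNReal.tsum_add]
  calc (1 : ℝ≥0∞) = ∑' z, q x z * 1 := by simp [hq x]
    _ ≤ ∑' z, (q x z * (1 - hitProbE q Y z) + q x z * hitProbE q Y z) := by
      gcongr with z
      rw [← mul_add]
      gcongr
      exact le_tsub_add

theorem tsum_inducedQE (x : X) : ∑' y, inducedQE q Y x y = ∑' z, q x z * hitProbE q Y z := by
  simp only [inducedQE, hitProbE, hitAtE, ← ENNReal.tsum_mul_left]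
  rw [ENNReal.tsum_comm]
  conv_lhs => enter [1, n]; rw [ENNReal.tsum_comm]
  exact ENNReal.tsum_comm

theorem tsum_visitDistE (hq : ∀ x, ∑' y, q x y = 1) (hhit : ∀ x, hitProbE q Y x = 1) (k : ℕ)
    (x : X) : ∑' y, visitDistE q Y k x y = 1 := by
  induction k generalizing x with
  | zero =>
    simp only [visitDistE]
    rw [ENNReal.tsum_comm]
    exact hhit x
  | succ k ih =>
    simp only [visitDistE]
    rw [ENNReal.tsum_comm]
    simp_rw [ENNReal.tsum_mul_left, tsum_inducedQE, hhit, mul_one, hq, mul_one]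
    exact ih x

end FirstEntrance

theorem ENNReal.toReal_tsum_mul {α : Type*} {f g : α → ℝ≥0∞} (hf : ∀ a, f a ≠ ∞)
    (hg : ∀ a, g a ≠ ∞) : (∑' a, f a * g a).toReal = ∑' a, (f a).toReal * (g a).toReal := by
  rw [ENNReal.tsum_toReal_eq fun a => ENNReal.mul_ne_top (hf a) (hg a)]
  simp_rw [ENNReal.toReal_mul]

section RealShadow

variable {p : X → X → ℝ} {q : X → X → ℝ≥0∞} {Y : Set X}

theorem alphaHit_eq_toReal (hpq : ∀ x y, p x y = (q x y).toReal) (hq : ∀ x, ∑' y, q x y ≤ 1)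
    (n : ℕ) (x y : X) : alphaHit p Y n x y = (alphaHitE q Y n x y).toReal := by
  have hqtop x : ∀ z, q x z ≠ ∞ :=
    ENNReal.ne_top_of_tsum_ne_top (ne_top_of_le_ne_top (by simp) (hq x))
  induction n generalizing x with
  | zero => simp only [alphaHit, alphaHitE]; split_ifs <;> simp
  | succ n ih =>
    simp only [alphaHit, alphaHitE]
    split_ifs
    · simp
    · rw [ENNReal.toReal_tsum_mul (hqtop x)
        fun z => ne_top_of_le_ne_top (by simp) (alphaHitE_le_one hq n z y)]
      simp only [hpq, ih]

theorem inducedQ_eq_toReal (hpq : ∀ x y, p x y = (q x y).toReal) (hq : ∀ x, ∑' y, q x y ≤ 1)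
    (x y : X) : inducedQ p Y x y = (inducedQE q Y x y).toReal := by
  have hqtop : ∀ z, q x z ≠ ∞ :=
    ENNReal.ne_top_of_tsum_ne_top (ne_top_of_le_ne_top (by simp) (hq x))
  have hαtop n z : alphaHitE q Y n z y ≠ ∞ :=
    ne_top_of_le_ne_top (by simp) (alphaHitE_le_one hq n z y)
  have hfirst n : ∑' z, q x z * alphaHitE q Y n z y ≠ ∞ := by
    refine ne_top_of_le_ne_top ENNReal.one_ne_top ((ENNReal.tsum_le_tsum fun z => ?_).trans (hq x))
    calc q x z * alphaHitE q Y n z y ≤ q x z * 1 := by gcongr; exact alphaHitE_le_one hq n z y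
      _ = q x z := mul_one _
  rw [inducedQE, ENNReal.tsum_toReal_eq hfirst]
  simp only [inducedQ, firstHit, ENNReal.toReal_tsum_mul hqtop (hαtop _), hpq,
    alphaHit_eq_toReal hpq hq]

theorem visitDist_eq_toReal (hpq : ∀ x y, p x y = (q x y).toReal) (hq : ∀ x, ∑' y, q x y = 1)
    (hhit : ∀ x, hitProbE q Y x = 1) (k : ℕ) (x y : X) :
    visitDist p Y k x y = (visitDistE q Y k x y).toReal := by
  have hinducedtop z : ∀ y, inducedQE q Y z y ≠ ∞ := ENNReal.ne_top_of_tsum_ne_top <| by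
    simp [tsum_inducedQE, hhit, hq]
  induction k generalizing y with
  | zero =>
    simp only [visitDist, visitDistE]
    rw [ENNReal.tsum_toReal_eq fun n =>
      ne_top_of_le_ne_top (by simp) (alphaHitE_le_one (fun x => (hq x).le) n x y)]
    simp only [alphaHit_eq_toReal hpq fun x => (hq x).le]
  | succ k ih =>
    simp only [visitDist, visitDistE]
    rw [ENNReal.toReal_tsum_mul (ENNReal.ne_top_of_tsum_ne_top (by simp [tsum_visitDistE hq hhit]))
      (hinducedtop · y)]
    simp only [ih, inducedQ_eq_toReal hpq fun x => (hq x).le]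

theorem tsum_visitDist (hpq : ∀ x y, p x y = (q x y).toReal) (hq : ∀ x, ∑' y, q x y = 1)
    (hhit : ∀ x, hitProbE q Y x = 1) (k : ℕ) (x : X) : ∑' y, visitDist p Y k x y = 1 := by
  simp only [visitDist_eq_toReal hpq hq hhit]
  rw [← ENNReal.tsum_toReal_eq <|
      ENNReal.ne_top_of_tsum_ne_top (by simp [tsum_visitDistE hq hhit]),
    tsum_visitDistE hq hhit, ENNReal.toReal_one]

theorem eq_zero_of_stepPow_ne_zero (hpq : ∀ x y, p x y = (q x y).toReal) {v : X → ℝ≥0∞}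
    (hv : ∀ x, ∑' z, q x z * v z ≤ v x) {n : ℕ} {x y : X} (hn : stepPow p n x y ≠ 0)
    (hx : v x = 0) : v y = 0 := by
  induction n generalizing x with
  | zero =>
    obtain rfl : x = y := by simpa [stepPow] using hn
    exact hx
  | succ n ih =>
    obtain ⟨z, hz⟩ : ∃ z, p x z * stepPow p n z y ≠ 0 := by
      by_contra! h
      simp [stepPow, h] at hn
    have hqz : q x z ≠ 0 := fun h => hz (by simp [hpq, h])
    have hvz : v z = 0 := by
      have := ENNReal.tsum_eq_zero.1 (nonpos_iff_eq_zero.1 (hx ▸ hv x)) z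
      exact (mul_eq_zero.1 this).resolve_left hqz
    exact ih (right_ne_zero_of_mul hz) hvz

end RealShadow

theorem ENNReal.eq_of_le_of_tsum_mul_eq {ι : Type*} {w f g : ι → ℝ≥0∞}
    (hfin : ∑' i, w i * f i ≠ ∞) (hle : ∀ i, f i ≤ g i) (heq : ∑' i, w i * g i = ∑' i, w i * f i)
    {i : ι} (hw₀ : w i ≠ 0) (hw : w i ≠ ∞) : f i = g i := by
  refine (hle i).antisymm (not_lt.1 fun hlt => ?_)
  refine (ENNReal.tsum_lt_tsum hfin (fun j => ?_) (ENNReal.mul_lt_mul_right hw₀ hw hlt)).ne' heq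
  gcongr
  exact hle j

noncomputable def networkChainE (a : X → X → ℝ) (x y : X) : ℝ≥0∞ :=
  ENNReal.ofReal (networkChain a x y)

theorem networkChainE_smul [Group Γ] [MulAction Γ X] {a : X → X → ℝ}
    (hinv : ∀ (γ : Γ) (x y : X), a (γ • x) (γ • y) = a x y) (γ : Γ) (x y : X) :
    networkChainE a (γ • x) (γ • y) = networkChainE a x y := by
  have hm : ∑' z, a (γ • x) z = ∑' z, a x z := by
    rw [← (MulAction.toPerm γ).tsum_eq]
    exact tsum_congr (hinv γ x)
  simp only [networkChainE, networkChain, hinv, hm]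

namespace IsNetwork

variable {a : X → X → ℝ}

theorem networkChain_eq_toReal (hnet : IsNetwork a) (x y : X) :
    networkChain a x y = (networkChainE a x y).toReal :=
  (ENNReal.toReal_ofReal (div_nonneg (hnet.1 x y) (hnet.2.2.2 x).le)).symm

theorem tsum_networkChainE (hnet : IsNetwork a) (x : X) : ∑' y, networkChainE a x y = 1 := by
  simp only [networkChainE]
  rw [← ENNReal.ofReal_tsum_of_nonneg (f := networkChain a x)
      (fun y => div_nonneg (hnet.1 x y) (hnet.2.2.2 x).le) ((hnet.2.2.1 x).div_const _)]
  simp [networkChain, tsum_div_const, div_self (hnet.2.2.2 x).ne']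

theorem ofReal_tsum_mul_networkChainE (hnet : IsNetwork a) (x y : X) :
    ENNReal.ofReal (∑' z, a x z) * networkChainE a x y = ENNReal.ofReal (a x y) := by
  rw [networkChainE, ← ENNReal.ofReal_mul (hnet.2.2.2 x).le, networkChain,
    mul_div_cancel₀ _ (hnet.2.2.2 x).ne']

variable [Group Γ] [MulAction Γ X] {D : Set X}

/-- `d ↦ m(d)/|Γ_d|` on `D` is the stationary measure of the quotient walk. -/
theorem tsum_fundDomain_mul_networkChainE (hnet : IsNetwork a)
    (hinv : ∀ (γ : Γ) (x y : X), a (γ • x) (γ • y) = a x y)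
    (hstab : ∀ x : X, Finite (MulAction.stabilizer Γ x)) (hD : IsFundDomain (Γ := Γ) D)
    {v : X → ℝ≥0∞} (hv : ∀ (γ : Γ) x, v (γ • x) = v x) :
    ∑' d : D, ENNReal.ofReal ((∑' y, a d y) / Nat.card (MulAction.stabilizer Γ (d : X))) *
        ∑' z, networkChainE a d z * v z =
      ∑' d : D, ENNReal.ofReal ((∑' y, a d y) / Nat.card (MulAction.stabilizer Γ (d : X))) *
        v d := by
  have hμ (d : X) : ENNReal.ofReal ((∑' y, a d y) / Nat.card (MulAction.stabilizer Γ d)) =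
      (Nat.card (MulAction.stabilizer Γ d) : ℝ≥0∞)⁻¹ * ENNReal.ofReal (∑' y, a d y) := by
    have := hstab d
    rw [ENNReal.ofReal_div_of_pos (by exact_mod_cast Nat.card_pos), ENNReal.ofReal_natCast,
      div_eq_mul_inv, mul_comm]
  have hF := hD.tsum_mass_transport hstab (F := fun x z => ENNReal.ofReal (a x z) * v z)
    fun γ x z => by simp only [hinv, hv]
  simp only [hμ, mul_assoc, ← ENNReal.tsum_mul_left, ← mul_assoc (ENNReal.ofReal _),
    hnet.ofReal_tsum_mul_networkChainE] at hF ⊢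
  rw [hF]
  refine tsum_congr fun d => ?_
  simp only [hnet.2.1 _ (d : X)]
  rw [ENNReal.tsum_mul_left, ENNReal.tsum_mul_right,
    ENNReal.ofReal_tsum_of_nonneg (hnet.1 d) (hnet.2.2.1 d)]

theorem tsum_networkChainE_mul_eq_of_invariant (hnet : IsNetwork a)
    (hinv : ∀ (γ : Γ) (x y : X), a (γ • x) (γ • y) = a x y)
    (hstab : ∀ x : X, Finite (MulAction.stabilizer Γ x)) (hD : IsFundDomain (Γ := Γ) D)
    (hsum : Summable fun d : D =>
      (∑' y, a (d : X) y) / (Nat.card (MulAction.stabilizer Γ (d : X)) : ℝ))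
    {v : X → ℝ≥0∞} (hv_inv : ∀ (γ : Γ) x, v (γ • x) = v x) (hv_le : ∀ x, v x ≤ 1)
    (hv_sub : ∀ x, v x ≤ ∑' z, networkChainE a x z * v z) (x : X) :
    ∑' z, networkChainE a x z * v z = v x := by
  have hPv_inv (γ : Γ) (y : X) :
      ∑' z, networkChainE a (γ • y) z * v z = ∑' z, networkChainE a y z * v z := by
    rw [← (MulAction.toPerm γ).tsum_eq]
    simp only [MulAction.toPerm_apply, networkChainE_smul hinv, hv_inv]
  have hfin : ∑' d : D,
      ENNReal.ofReal ((∑' y, a d y) / Nat.card (MulAction.stabilizer Γ (d : X))) * v d ≠ ∞ := by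
    refine ne_top_of_le_ne_top ?_ (ENNReal.tsum_le_tsum fun d => mul_le_of_le_one_right' (hv_le d))
    rw [← ENNReal.ofReal_tsum_of_nonneg
      (fun d : D => div_nonneg (tsum_nonneg (hnet.1 d)) (Nat.cast_nonneg _)) hsum]
    exact ENNReal.ofReal_ne_top
  obtain ⟨d, ⟨hd, γ, rfl⟩, -⟩ := hD x
  have := hstab d
  rw [hPv_inv, hv_inv]
  refine (ENNReal.eq_of_le_of_tsum_mul_eq hfin (fun d : D => hv_sub d)
    (hnet.tsum_fundDomain_mul_networkChainE hinv hstab hD hv_inv) (i := ⟨d, hd⟩) ?_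
    ENNReal.ofReal_ne_top).symm
  exact (ENNReal.ofReal_pos.2 (div_pos (hnet.2.2.2 d) (by exact_mod_cast Nat.card_pos))).ne'

theorem hitProbE_orbit_eq_one (hnet : IsNetwork a) (hirr : ChainIrreducible (networkChain a))
    (hinv : ∀ (γ : Γ) (x y : X), a (γ • x) (γ • y) = a x y)
    (hstab : ∀ x : X, Finite (MulAction.stabilizer Γ x)) (hD : IsFundDomain (Γ := Γ) D)
    (hsum : Summable fun d : D =>
      (∑' y, a (d : X) y) / (Nat.card (MulAction.stabilizer Γ (d : X)) : ℝ)) (o x : X) :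
    hitProbE (networkChainE a) (MulAction.orbit Γ o) x = 1 := by
  set u := hitProbE (networkChainE a) (MulAction.orbit Γ o)
  have hu_inv (γ : Γ) (y : X) : u (γ • y) = u y :=
    hitProbE_equiv (MulAction.toPerm γ) (networkChainE_smul hinv γ)
      (fun y => by rw [MulAction.toPerm_apply, MulAction.mem_orbit_symm, MulAction.orbit_smul,
        MulAction.mem_orbit_symm]) y
  have hharm := hnet.tsum_networkChainE_mul_eq_of_invariant hinv hstab hD hsum
    (v := fun y => 1 - u y) (fun γ y => by simp only [hu_inv]) (fun _ => tsub_le_self)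
    (one_sub_hitProbE_le hnet.tsum_networkChainE)
  obtain ⟨n, hn⟩ := hirr o x
  have hvx : 1 - u x = 0 :=
    eq_zero_of_stepPow_ne_zero hnet.networkChain_eq_toReal (fun y => (hharm y).le) hn.ne'
      (by simp [u, hitProbE_of_mem (MulAction.mem_orbit_self o)])
  exact (hitProbE_le_one (fun y => (hnet.tsum_networkChainE y).le) x).antisymm
    (tsub_eq_zero_iff_le.1 hvx)

end IsNetwork

theorem walk_meets_orbit_infinitely_often_general
    [Group Γ] [MulAction Γ X]
    (a : X → X → ℝ) (hnet : IsNetwork a)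
    (hirr : ChainIrreducible (networkChain a))
    (hinv : ∀ (γ : Γ) (x y : X), a (γ • x) (γ • y) = a x y)
    (hstab : ∀ x : X, Finite (MulAction.stabilizer Γ x))
    (D : Set X) (hD : IsFundDomain (Γ := Γ) D)
    (hsum : Summable (fun d : D =>
      (∑' y, a (d : X) y) / (Nat.card (MulAction.stabilizer Γ (d : X)) : ℝ))) :
    ∀ (o x : X) (k : ℕ),
      ∑' y, visitDist (networkChain a) (MulAction.orbit Γ o) k x y = 1 := by
  intro o x k
  exact tsum_visitDist hnet.networkChain_eq_toReal hnet.tsum_networkChainE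
    (hnet.hitProbE_orbit_eq_one hirr hinv hstab hD hsum o) k x

/-- Let `(X,a)` be an irreducible network with walk `P`, and `Γ` a group of
automorphisms of the network with finite stabilizers such that
`Σ_{x ∈ D} m(x)/|Γ_x| < ∞` for some fundamental domain `D`.  Then for any `o ∈ X`, the
random walk started at any point meets the orbit `Γ·o` infinitely often almost surely:
every successive visit time of `Γ·o` is almost surely finite. -/
theorem walk_meets_orbit_infinitely_often
    [Countable X] [Group Γ] [MulAction Γ X]
    (a : X → X → ℝ) (hnet : IsNetwork a)
    (hirr : ChainIrreducible (networkChain a))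
    (hinv : ∀ (γ : Γ) (x y : X), a (γ • x) (γ • y) = a x y)
    (hstab : ∀ x : X, Finite (MulAction.stabilizer Γ x))
    (D : Set X) (hD : IsFundDomain (Γ := Γ) D)
    (hsum : Summable (fun d : D =>
      (∑' y, a (d : X) y) / (Nat.card (MulAction.stabilizer Γ (d : X)) : ℝ))) :
    ∀ (o x : X) (k : ℕ),
      ∑' y, visitDist (networkChain a) (MulAction.orbit Γ o) k x y = 1 :=
  walk_meets_orbit_infinitely_often_general a hnet hirr hinv hstab D hD hsum

end
end

section
/- Let Δ be a thick spherical building of type (W,S) with Weyl distance δ : Δ × Δ → W and longest element w₀ ∈ W. Then for any two chambers C, C' of Δ there exists a chamber C'' which is opposite to both, i.e. δ(C'', C) = w₀ and δ(C'', C') = w₀. -/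
noncomputable section

namespace ChamberOppAux

open List CoxeterSystem

open scoped Classical

variable {B : Type*} {W : Type*} [Group W] {M : CoxeterMatrix B} (cs : CoxeterSystem M W)

local prefix:100 "σ" => cs.simple
local prefix:100 "π" => cs.wordProd
local prefix:100 "ℓ" => cs.length

/-- The sign-flipping involution attached to a simple reflection, acting on `W × ℤˣ`. -/
def eta (i : B) : Function.End (W × ℤˣ) :=
  fun x => (σ i * x.1 * σ i, if x.1 = σ i then -x.2 else x.2)

/-- Composite of the `eta` maps along a word. -/
def F (ω : List B) : Function.End (W × ℤˣ) := (ω.map (eta cs)).prod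

lemma F_nil : F cs [] = 1 := rfl

lemma F_cons (i : B) (ω : List B) : F cs (i :: ω) = eta cs i * F cs ω := by
  simp [F]

lemma F_apply (ω : List B) (t : W) (ε : ℤˣ) :
    F cs ω (t, ε) = (π ω * t * (π ω)⁻¹,
      (-1 : ℤˣ) ^ ((cs.rightInvSeq ω).count t) * ε) := by
  induction ω with
  | nil =>
      simp only [F, List.map_nil, List.prod_nil, cs.rightInvSeq_nil, List.count_nil,
        pow_zero, one_mul, cs.wordProd_nil, inv_one, mul_one]
      rfl
  | cons i ω ih =>
      have hris : cs.rightInvSeq (i :: ω) = ((π ω)⁻¹ * σ i * π ω) :: cs.rightInvSeq ω := rfl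
      have happ : F cs (i :: ω) (t, ε) = eta cs i (F cs ω (t, ε)) := by
        rw [F_cons]; rfl
      rw [happ, ih]
      simp only [eta, hris, List.count_cons, cs.wordProd_cons, Prod.mk.injEq, beq_iff_eq]
      refine ⟨by rw [mul_inv_rev, cs.inv_simple]; group, ?_⟩
      by_cases h : π ω * t * (π ω)⁻¹ = σ i
      · have h' : (π ω)⁻¹ * σ i * π ω = t := by
          rw [← h]; group
        simp only [if_pos h, if_pos h', pow_succ]
        simp [mul_neg_one, neg_mul, mul_neg]
      · have h' : ¬ ((π ω)⁻¹ * σ i * π ω = t) := by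
          intro hc; apply h; rw [← hc]; group
        simp only [if_neg h, if_neg h', add_zero]

/-- `tau i j n` is the reflection `π(aw i j n)⁻¹ * (head letter) * π(aw i j n)`. -/
def tau (i j : B) (n : ℕ) : W :=
  (π (alternatingWord i j n))⁻¹ * σ (if Even n then j else i) * π (alternatingWord i j n)

lemma ris_alternatingWord (i j : B) (n : ℕ) :
    cs.rightInvSeq (alternatingWord i j n) = ((List.range n).reverse).map (tau cs i j) := by
  induction n with
  | zero => rfl
  | succ n ih =>
      rw [alternatingWord_succ' i j n]
      have : cs.rightInvSeq ((if Even n then j else i) :: alternatingWord i j n)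
          = ((π (alternatingWord i j n))⁻¹ * σ (if Even n then j else i) *
              π (alternatingWord i j n)) :: cs.rightInvSeq (alternatingWord i j n) := rfl
      rw [this, ih, List.range_succ, List.reverse_append]
      simp [tau]

lemma tau_closed (i j : B) (n : ℕ) :
    tau cs i j n = ((σ i * σ j) ^ n)⁻¹ * σ j := by
  set p := σ i * σ j with hp
  clear_value p
  have hswap1 : σ j * p = p⁻¹ * σ j := by
    rw [hp, mul_inv_rev, cs.inv_simple, cs.inv_simple, ← mul_assoc]
  have hswap : ∀ a : ℕ, σ j * p ^ a = (p ^ a)⁻¹ * σ j := by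
    intro a
    induction a with
    | zero => simp
    | succ a ih =>
        have h1 : σ j * p ^ (a + 1) = (p ^ a)⁻¹ * (σ j * p) := by
          rw [pow_succ, ← mul_assoc, ih, mul_assoc]
        rw [h1, hswap1, pow_succ', mul_inv_rev, mul_assoc]
  unfold tau
  rw [cs.prod_alternatingWord_eq_mul_pow]
  simp only [← hp]
  by_cases hn : Even n
  · rw [if_pos hn, if_pos hn, one_mul]
    obtain ⟨k, hk⟩ := hn
    have ha : n / 2 = k := by omega
    rw [ha, hk]
    calc (p ^ k)⁻¹ * σ j * p ^ k
        = (p ^ k)⁻¹ * ((p ^ k)⁻¹ * σ j) := by rw [mul_assoc, hswap]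
      _ = (p ^ (k + k))⁻¹ * σ j := by rw [pow_add, mul_inv_rev]; group
  · rw [if_neg hn, if_neg hn]
    obtain ⟨k, hk⟩ := Nat.not_even_iff_odd.mp hn
    have ha : n / 2 = k := by omega
    rw [ha, hk]
    rw [mul_inv_rev, cs.inv_simple]
    calc (p ^ k)⁻¹ * σ j * σ i * (σ j * p ^ k)
        = (p ^ k)⁻¹ * ((σ j * p) * p ^ k) := by rw [hp]; group
      _ = (p ^ k)⁻¹ * (p⁻¹ * (σ j * p ^ k)) := by rw [hswap1]; group
      _ = (p ^ k)⁻¹ * (p⁻¹ * ((p ^ k)⁻¹ * σ j)) := by rw [hswap]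
      _ = (p ^ (2 * k + 1))⁻¹ * σ j := by
          rw [show 2 * k + 1 = k + 1 + k by ring, pow_add, pow_add, pow_one,
            mul_inv_rev, mul_inv_rev]
          group

lemma tau_period (i j : B) (m : ℕ) (h : (σ i * σ j) ^ m = 1) (n : ℕ) :
    tau cs i j (m + n) = tau cs i j n := by
  rw [tau_closed, tau_closed, pow_add, h, one_mul]

lemma eta_liftable : M.IsLiftable (eta cs) := by
  intro i j
  have key : (eta cs i * eta cs j) ^ (M i j) = F cs (alternatingWord i j (2 * M i j)) := by
    induction (M i j) with
    | zero => rfl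
    | succ m ih =>
        have h1 : 2 * (m + 1) = (2 * m + 1) + 1 := by ring
        rw [h1, alternatingWord_succ' i j, alternatingWord_succ' i j]
        have he : ¬ Even (2 * m + 1) := by simp [Nat.even_add_one]
        have he2 : Even (2 * m) := even_two_mul m
        rw [if_neg he, if_pos he2, F_cons, F_cons, ← ih, pow_succ', mul_assoc]
  rw [key]
  funext x
  obtain ⟨t, ε⟩ := x
  have hprod : π (alternatingWord i j (2 * M i j)) = 1 := by
    rw [cs.prod_alternatingWord_eq_mul_pow]
    have : Even (2 * M i j) := even_two_mul _
    rw [if_pos this]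
    simp [Nat.mul_div_cancel_left, cs.simple_mul_simple_pow i j]
  have hcount : Even ((cs.rightInvSeq (alternatingWord i j (2 * M i j))).count t) := by
    rw [ris_alternatingWord, List.map_reverse, List.count_reverse]
    have h2 : 2 * M i j = M i j + M i j := by ring
    rw [h2, List.range_add, List.map_append, List.map_map]
    have h3 : List.map (tau cs i j ∘ (fun k => M i j + k)) (List.range (M i j))
        = List.map (tau cs i j) (List.range (M i j)) := by
      apply List.map_congr_left
      intro k _
      exact tau_period cs i j (M i j) (cs.simple_mul_simple_pow i j) k
    rw [h3, List.count_append]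
    exact Even.add_self _
  rw [F_apply, hprod]
  simp only [one_mul, inv_one, mul_one, Function.End.one_def]
  rw [Even.neg_one_pow hcount]
  simp [id]

/-- The homomorphism `W →* Function.End (W × ℤˣ)`. -/
def psi : W →* Function.End (W × ℤˣ) := cs.lift ⟨eta cs, eta_liftable cs⟩

lemma psi_simple (i : B) : psi cs (σ i) = eta cs i :=
  cs.lift_apply_simple (eta_liftable cs) i

lemma psi_wordProd (ω : List B) : psi cs (π ω) = F cs ω := by
  induction ω with
  | nil => simp [F_nil]
  | cons i ω ih => rw [cs.wordProd_cons, map_mul, psi_simple, ih, F_cons]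

/-- The sign cocycle. -/
def mu (x t : W) : ℤˣ := (psi cs x (t, 1)).2

lemma psi_apply (x t : W) (ε : ℤˣ) :
    psi cs x (t, ε) = (x * t * x⁻¹, mu cs x t * ε) := by
  obtain ⟨ω, rfl⟩ := cs.wordProd_surjective x
  rw [psi_wordProd, F_apply]
  unfold mu
  rw [psi_wordProd, F_apply]
  simp

lemma mu_wordProd (ω : List B) (t : W) :
    mu cs (π ω) t = (-1 : ℤˣ) ^ ((cs.rightInvSeq ω).count t) := by
  unfold mu
  rw [psi_wordProd, F_apply]
  simp

lemma mu_one (t : W) : mu cs 1 t = 1 := by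
  unfold mu
  simp [Function.End.one_def]

lemma mu_mul (x y t : W) : mu cs (x * y) t = mu cs x (y * t * y⁻¹) * mu cs y t := by
  have h : psi cs (x * y) (t, 1) = psi cs x (psi cs y (t, 1)) := by
    rw [map_mul]; rfl
  rw [psi_apply cs y t 1, psi_apply cs x, psi_apply cs (x * y) t 1] at h
  have h2 := congrArg Prod.snd h
  simpa using h2

lemma mu_simple (i : B) (t : W) : mu cs (σ i) t = if t = σ i then -1 else 1 := by
  unfold mu
  rw [psi_simple]
  rfl

lemma mu_self {t : W} (ht : cs.IsReflection t) : mu cs t t = -1 := by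
  obtain ⟨v, k, rfl⟩ := ht
  have h1 : mu cs v⁻¹ (v * σ k * v⁻¹) * mu cs v (σ k) = 1 := by
    have h := mu_mul cs v⁻¹ v (σ k)
    rw [inv_mul_cancel, mu_one] at h
    exact h.symm
  have e1 : v * σ k * v⁻¹ = v * (σ k * v⁻¹) := by group
  nth_rewrite 1 [e1]
  rw [mu_mul]
  have e2 : σ k * v⁻¹ * (v * σ k * v⁻¹) * (σ k * v⁻¹)⁻¹ = σ k := by group
  rw [e2, mu_mul]
  have e3 : v⁻¹ * (v * σ k * v⁻¹) * v⁻¹⁻¹ = σ k := by group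
  rw [e3, mu_simple, if_pos rfl]
  rcases Int.units_eq_one_or (mu cs v (σ k)) with ha | ha <;>
    rcases Int.units_eq_one_or (mu cs v⁻¹ (v * σ k * v⁻¹)) with hb | hb <;>
    rw [ha, hb] at h1 ⊢ <;> revert h1 <;> decide

lemma mu_neg_one_iff_mem {ω : List B} (hω : cs.IsReduced ω) (t : W) :
    mu cs (π ω) t = -1 ↔ t ∈ cs.rightInvSeq ω := by
  rw [mu_wordProd]
  have hnd : (cs.rightInvSeq ω).Nodup := hω.nodup_rightInvSeq
  constructor
  · intro h
    by_contra hmem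
    rw [List.count_eq_zero_of_not_mem hmem] at h
    simp at h
  · intro hmem
    rw [List.count_eq_one_of_mem hnd hmem]
    simp

/-- Key characterization: for a reflection `t`, `mu x t = -1` iff `t` is a right inversion. -/
lemma mu_neg_one_iff {t : W} (ht : cs.IsReflection t) (x : W) :
    mu cs x t = -1 ↔ ℓ (x * t) < ℓ x := by
  constructor
  · intro h
    obtain ⟨ω, hω, rfl⟩ := cs.exists_reduced_word' x
    rw [mu_neg_one_iff_mem cs hω] at h
    exact (cs.isRightInversion_of_mem_rightInvSeq hω h).2
  · intro h
    have hx : x = (x * t) * t := by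
      rw [mul_assoc, ht.mul_self, mul_one]
    rw [hx, mu_mul]
    have e1 : t * t * t⁻¹ = t := by rw [mul_assoc, mul_inv_cancel, mul_one]
    rw [e1, mu_self cs ht]
    have : mu cs (x * t) t = 1 := by
      rcases Int.units_eq_one_or (mu cs (x * t) t) with h1 | h1
      · exact h1
      · exfalso
        obtain ⟨ω, hω, hprod⟩ := cs.exists_reduced_word' (x * t)
        rw [hprod, mu_neg_one_iff_mem cs hω] at h1
        have h4 := (cs.isRightInversion_of_mem_rightInvSeq hω h1).2
        rw [← hprod, mul_assoc, ht.mul_self, mul_one] at h4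
        omega
    rw [this]
    decide

lemma mu_neg_one_iff_left {t : W} (ht : cs.IsReflection t) (x : W) :
    mu cs x⁻¹ t = -1 ↔ ℓ (t * x) < ℓ x := by
  rw [mu_neg_one_iff cs ht x⁻¹]
  have h1 : ℓ (x⁻¹ * t) = ℓ (t * x) := by
    rw [← cs.length_inv (x⁻¹ * t)]
    congr 1
    rw [mul_inv_rev, inv_inv, ht.inv]
  rw [h1, cs.length_inv]

/-- The key lemma: if every simple reflection is a left descent of `w`, then
lengths are additive towards `w`. -/
lemma longest_additivity (w : W) (hw : ∀ i, ℓ (σ i * w) < ℓ w) :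
    ∀ u : W, ℓ u + ℓ (u⁻¹ * w) = ℓ w := by
  suffices H : ∀ (n : ℕ) (u : W), ℓ u = n → ℓ u + ℓ (u⁻¹ * w) = ℓ w by
    intro u; exact H (ℓ u) u rfl
  intro n
  induction n using Nat.strong_induction_on with
  | _ n ih =>
    intro u hu
    rcases eq_or_ne u 1 with rfl | hne
    · simp
    · obtain ⟨i, hi⟩ := cs.exists_leftDescent_of_ne_one hne
      set u' := σ i * u with hu'def
      have hlu' : ℓ u' + 1 = ℓ u := by
        rcases cs.length_simple_mul u i with h | h
        · exfalso; unfold CoxeterSystem.IsLeftDescent at hi; omega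
        · exact h
      have ihu' : ℓ u' + ℓ (u'⁻¹ * w) = ℓ w := ih (ℓ u') (by omega) u' rfl
      set t := u'⁻¹ * σ i * u' with htdef
      have ht : cs.IsReflection t := by
        have := (cs.isReflection_simple i).conj u'⁻¹
        simpa [htdef, mul_assoc] using this
      have hkey : ℓ (t * (u'⁻¹ * w)) < ℓ (u'⁻¹ * w) := by
        rw [← mu_neg_one_iff_left cs ht (u'⁻¹ * w)]
        have hinv : (u'⁻¹ * w)⁻¹ = w⁻¹ * u' := by group
        rw [hinv, mu_mul]
        have e1 : u' * t * u'⁻¹ = σ i := by rw [htdef]; group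
        rw [e1]
        have h2 : mu cs w⁻¹ (σ i) = -1 := by
          rw [mu_neg_one_iff cs (cs.isReflection_simple i) w⁻¹]
          have : ℓ (w⁻¹ * σ i) = ℓ (σ i * w) := by
            rw [← cs.length_inv (w⁻¹ * σ i), mul_inv_rev, inv_inv, cs.inv_simple]
          rw [this, cs.length_inv]
          exact hw i
        have h3 : mu cs u' t = 1 := by
          rcases Int.units_eq_one_or (mu cs u' t) with h1 | h1
          · exact h1
          · exfalso
            rw [mu_neg_one_iff cs ht u'] at h1
            have hut : u' * t = u := by
              have h5 : u' * t = σ i * u' := by rw [htdef]; group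
              rw [h5, hu'def, cs.simple_mul_simple_cancel_left]
            rw [hut] at h1
            omega
        rw [h2, h3]
        decide
      have e2 : t * (u'⁻¹ * w) = u⁻¹ * w := by
        rw [htdef, hu'def]; group
      rw [e2] at hkey
      have hle : ℓ w ≤ ℓ u + ℓ (u⁻¹ * w) := by
        have := cs.length_mul_le u (u⁻¹ * w)
        rw [← mul_assoc, mul_inv_cancel, one_mul] at this
        exact this
      omega

lemma all_descent_eq_longest (w₀ : W) (hw₀ : ∀ v, ℓ v ≤ ℓ w₀) (w : W)
    (hw : ∀ i, ℓ (σ i * w) < ℓ w) : w = w₀ := by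
  have h := longest_additivity cs w hw w₀
  have h0 : ℓ (w₀⁻¹ * w) = 0 := by have := hw₀ w; omega
  have h1 : w₀⁻¹ * w = 1 := (cs.length_eq_zero_iff).mp h0
  exact (inv_mul_eq_one.mp h1).symm

lemma exists_ascent (w₀ : W) (hw₀ : ∀ v, ℓ v ≤ ℓ w₀) (w : W) (hne : w ≠ w₀) :
    ∃ i, ℓ (σ i * w) = ℓ w + 1 := by
  by_contra hcon
  push_neg at hcon
  apply hne
  apply all_descent_eq_longest cs w₀ hw₀ w
  intro i
  rcases cs.length_simple_mul w i with h | h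
  · exact absurd h (hcon i)
  · omega

lemma length_lt_of_ne (w₀ : W) (hw₀ : ∀ v, ℓ v ≤ ℓ w₀) (w : W) (hne : w ≠ w₀) :
    ℓ w < ℓ w₀ := by
  rcases lt_or_eq_of_le (hw₀ w) with h | h
  · exact h
  · exfalso
    apply hne
    apply all_descent_eq_longest cs w₀ hw₀ w
    intro i
    have h1 := cs.length_simple_mul_ne w i
    have h2 := hw₀ (σ i * w)
    omega

end ChamberOppAux

/-- Let `Δ` (chambers `C`) be a thick spherical building of type `(W,S)`,
presented as a `W`-metric space: a Weyl distance function `δ : C × C → W` satisfying the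
building axioms (WD1)–(WD3) of Abramenko–Brown.  If `w₀` is the longest element of the
finite Coxeter group `W`, then for any two chambers `c, c'` there is a chamber opposite to
both of them. -/
theorem chamber_opposite_to_two_chambers
    {B W : Type*} [Group W] {M : CoxeterMatrix B} (cs : CoxeterSystem M W)
    [Finite W] {C : Type*} (δ : C → C → W)
    (hsymm : ∀ c d, δ d c = (δ c d)⁻¹)
    (WD1 : ∀ c d, δ c d = 1 ↔ c = d)
    (WD2 : ∀ (c d c' : C) (i : B), δ c' c = cs.simple i →
      (δ c' d = cs.simple i * δ c d ∨ δ c' d = δ c d) ∧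
      (cs.length (cs.simple i * δ c d) = cs.length (δ c d) + 1 →
        δ c' d = cs.simple i * δ c d))
    (WD3 : ∀ (c d : C) (i : B), ∃ c' : C,
      δ c' c = cs.simple i ∧ δ c' d = cs.simple i * δ c d)
    (thick : ∀ (c : C) (i : B), ∃ d e : C, d ≠ e ∧
      δ c d = cs.simple i ∧ δ c e = cs.simple i)
    (w₀ : W) (hw₀ : ∀ w : W, cs.length w ≤ cs.length w₀)
    (c c' : C) :
    ∃ c'' : C, δ c'' c = w₀ ∧ δ c'' c' = w₀ := by
  classical
  have hdesc : ∀ i, cs.length (cs.simple i * w₀) < cs.length w₀ := fun i =>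
    lt_of_le_of_ne (hw₀ _) (cs.length_simple_mul_ne w₀ i)
  have hdesc' : ∀ i, cs.length (cs.simple i * (cs.simple i * w₀))
      = cs.length (cs.simple i * w₀) + 1 := by
    intro i
    rw [cs.simple_mul_simple_cancel_left]
    have h1 := hdesc i
    rcases cs.length_simple_mul w₀ i with h | h <;> omega
  have hlt : ∀ w : W, w ≠ w₀ → cs.length w < cs.length w₀ :=
    ChamberOppAux.length_lt_of_ne cs w₀ hw₀
  have hasc := ChamberOppAux.exists_ascent cs w₀ hw₀
  have hexists : ∀ (w : W) (d : C), ∃ e : C, δ e d = w := by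
    intro w d
    refine cs.simple_induction_left (p := fun w => ∃ e : C, δ e d = w) w ?_ ?_
    · exact ⟨d, (WD1 d d).mpr rfl⟩
    · rintro w i ⟨e, he⟩
      obtain ⟨e', h1, h2⟩ := WD3 e d i
      exact ⟨e', by rw [h2, he]⟩
  obtain ⟨c₀, hc₀⟩ := hexists w₀ c
  suffices H : ∀ (n : ℕ) (x : C), δ x c = w₀ → cs.length w₀ - cs.length (δ x c') ≤ n →
      ∃ c'' : C, δ c'' c = w₀ ∧ δ c'' c' = w₀ by
    exact H (cs.length w₀) c₀ hc₀ (Nat.sub_le _ _)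
  intro n
  induction n with
  | zero =>
      intro x hx hm
      refine ⟨x, hx, ?_⟩
      by_contra hne
      have := hlt _ hne
      omega
  | succ n ih =>
      intro x hx hm
      by_cases hd : δ x c' = w₀
      · exact ⟨x, hx, hd⟩
      obtain ⟨i, hi⟩ := hasc _ hd
      obtain ⟨d, e, hde, hxd, hxe⟩ := thick x i
      have hdx : δ d x = cs.simple i := by rw [hsymm x d, hxd, cs.inv_simple]
      have hex : δ e x = cs.simple i := by rw [hsymm x e, hxe, cs.inv_simple]
      have hyc : ∃ y : C, δ y x = cs.simple i ∧ δ y c = w₀ := by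
        have hoptd := (WD2 x c d i hdx).1
        have hopte := (WD2 x c e i hex).1
        rw [hx] at hoptd hopte
        rcases hoptd with hd1 | hd1
        · rcases hopte with he1 | he1
          · exfalso
            have hdee : δ d e = cs.simple i := by
              have h2 := (WD2 x e d i hdx).1
              rw [hxe] at h2
              rcases h2 with h | h
              · rw [cs.simple_mul_simple_self] at h
                exact absurd ((WD1 d e).mp h) hde
              · exact h
            have hed : δ e d = cs.simple i := by rw [hsymm d e, hdee, cs.inv_simple]
            have h6 := (WD2 d c e i hed).2
            rw [hd1] at h6
            have h7 := h6 (hdesc' i)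
            rw [cs.simple_mul_simple_cancel_left] at h7
            rw [he1] at h7
            have h8 := congrArg cs.length h7
            have h9 := hdesc i
            omega
          · exact ⟨e, hex, he1⟩
        · exact ⟨d, hdx, hd1⟩
      obtain ⟨y, hyx, hyc⟩ := hyc
      have hyc' : δ y c' = cs.simple i * δ x c' := (WD2 x c' y i hyx).2 hi
      apply ih y hyc
      rw [hyc', hi]
      omega

end
end

section
/- Let X be a building of type (W,S) with Weyl distance δ on chambers, let π : Ch(X) → {0,1} be any map, and let E ⊆ W be the set of all w ∈ W such that for every pair of chambers with δ(ω,ω') = w one has π(ω) = π(ω'). Suppose every rank-1 residue of X has at least 3 chambers (thickness). If w ∈ E and w = s w' with s ∈ S and ℓ(w) = ℓ(w') + 1, then s ∈ E and w' ∈ E. -/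
noncomputable section

/-- The set `E` of Weyl group elements `w` such that any two chambers at Weyl distance `w`
have the same image under `π`. -/
def distInvariantSet {W C : Type*} (δ : C → C → W) (π : C → Bool) : Set W :=
  {w | ∀ ω ω' : C, δ ω ω' = w → π ω = π ω'}

/-- Let `X` (chambers `C`) be a thick building of type `(W,S)`, given as
a `W`-metric space with Weyl distance `δ`, and `π : Ch(X) → {0,1}` any map.  Let `E` be the
set of `w ∈ W` such that `δ(ω,ω') = w` always implies `π(ω) = π(ω')`.  If `w ∈ E` and
`w = s·w'` with `s ∈ S` simple and `ℓ(w) = ℓ(w') + 1`, then `s ∈ E` and `w' ∈ E`. -/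
theorem distInvariantSet_closed_under_splitting
    {B W : Type*} [Group W] {M : CoxeterMatrix B} (cs : CoxeterSystem M W)
    {C : Type*} (δ : C → C → W)
    (hsymm : ∀ c d, δ d c = (δ c d)⁻¹)
    (WD1 : ∀ c d, δ c d = 1 ↔ c = d)
    (WD2 : ∀ (c d c' : C) (i : B), δ c' c = cs.simple i →
      (δ c' d = cs.simple i * δ c d ∨ δ c' d = δ c d) ∧
      (cs.length (cs.simple i * δ c d) = cs.length (δ c d) + 1 →
        δ c' d = cs.simple i * δ c d))
    (WD3 : ∀ (c d : C) (i : B), ∃ c' : C,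
      δ c' c = cs.simple i ∧ δ c' d = cs.simple i * δ c d)
    (thick : ∀ (c : C) (i : B), ∃ d e : C, d ≠ e ∧
      δ c d = cs.simple i ∧ δ c e = cs.simple i)
    (π : C → Bool)
    (w w' : W) (i : B)
    (hw : w ∈ distInvariantSet δ π)
    (hsplit : w = cs.simple i * w')
    (hlen : cs.length w = cs.length w' + 1) :
    cs.simple i ∈ distInvariantSet δ π ∧ w' ∈ distInvariantSet δ π := by
  -- existence of a chamber at any prescribed Weyl distance
  have exists_at : ∀ (u : W) (a : C), ∃ b : C, δ b a = u := by
    intro u a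
    obtain ⟨l, rfl⟩ := cs.wordProd_surjective u
    induction l with
    | nil => exact ⟨a, by rw [cs.wordProd_nil]; exact (WD1 a a).mpr rfl⟩
    | cons j l ih =>
      obtain ⟨b', hb'⟩ := ih
      obtain ⟨b, _, hb2⟩ := WD3 b' a j
      exact ⟨b, by rw [hb2, hb', cs.wordProd_cons]⟩
  have hlw : cs.length (cs.simple i * w') = cs.length w' + 1 := by
    rw [← hsplit]; exact hlen
  -- key fact: if δ x a = s and δ a b = w' then δ x b = w
  have key : ∀ a b x : C, δ x a = cs.simple i → δ a b = w' → δ x b = w := by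
    intro a b x hx hab
    have := (WD2 a b x i hx).2 (by rw [hab]; exact hlw)
    rw [this, hab, hsplit]
  -- any two chambers at distance s from a common chamber have equal π
  have same : ∀ a x y : C, δ x a = cs.simple i → δ y a = cs.simple i → π x = π y := by
    intro a x y hx hy
    obtain ⟨b, hb⟩ := exists_at w'⁻¹ a
    have hab : δ a b = w' := by rw [hsymm, hb, inv_inv]
    exact (hw x b (key a b x hx hab)).trans (hw y b (key a b y hy hab)).symm
  have hsE : cs.simple i ∈ distInvariantSet δ π := by
    intro ω ω' h
    have hω'ω : δ ω' ω = cs.simple i := by rw [hsymm, h, cs.inv_simple]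
    obtain ⟨d, e, hde, hd, he⟩ := thick ω i
    -- pick a third chamber c ≠ ω' with δ ω c = s
    obtain ⟨c, hc, hcω'⟩ : ∃ c : C, δ ω c = cs.simple i ∧ c ≠ ω' := by
      by_cases hd' : d = ω'
      · exact ⟨e, he, fun h => hde (hd'.trans h.symm)⟩
      · exact ⟨d, hd, hd'⟩
    have hcω : δ c ω = cs.simple i := by rw [hsymm, hc, cs.inv_simple]
    have hcω'' : δ c ω' = cs.simple i := by
      rcases (WD2 ω ω' c i hcω).1 with h1 | h1
      · exfalso
        rw [h, cs.simple_mul_simple_self] at h1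
        exact hcω' ((WD1 c ω').mp h1)
      · rw [h1, h]
    have h1 : π ω' = π c := same ω ω' c hω'ω hcω
    have h2 : π ω = π c := same ω' ω c h hcω''
    rw [h1, h2]
  refine ⟨hsE, ?_⟩
  intro ω ω' h
  obtain ⟨ω₁, h1, h2⟩ := WD3 ω ω' i
  rw [h, ← hsplit] at h2
  exact (hsE ω₁ ω h1).symm.trans (hw ω₁ ω' h2)


end
end

section
/- Let X be a thick building of type (W,S), π : Ch(X) → {0,1} a map, and E ⊆ W the set of w ∈ W such that δ(ω,ω') = w implies π(ω) = π(ω'). Let J ⊆ S be minimal such that E ⊆ W_J (the standard parabolic subgroup generated by J). Then π is constant on every J-residue of X. -/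
/-!
Let `E` be the set of Weyl distances along which `π` is constant. Composing galleries shows that
`E` is a subgroup of `W`. Thickness gives the reduction lemma: if `s w` is reduced and lies in `E`,
then so do `s` and `w` (two `s`-adjacent chambers `a, b` both lie at distance `s w` from a chamber
reached through a third chamber of their `s`-panel). By induction on reduced words, `E` is then
contained in `W_{J'}` with `J' = {s | s ∈ E}`, so minimality of `J` forces `J ⊆ J' ⊆ E`, whence
`W_J ⊆ E`.
-/

noncomputable section

namespace CoxeterSystem

variable {B W : Type*} [Group W] {M : CoxeterMatrix B} (cs : CoxeterSystem M W)

theorem induction_on_reduced_left {P : W → Prop} (one : P 1)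
    (simple_mul : ∀ (i : B) (w : W), cs.length (cs.simple i * w) = cs.length w + 1 →
      P w → P (cs.simple i * w))
    (w : W) : P w := by
  induction hn : cs.length w using Nat.strong_induction_on generalizing w with
  | _ n ih =>
    by_cases hw : w = 1
    · exact hw ▸ one
    obtain ⟨i, hi⟩ := cs.exists_leftDescent_of_ne_one hw
    have hlen : cs.length (cs.simple i * w) + 1 = cs.length w := cs.isLeftDescent_iff.mp hi
    have hw' : w = cs.simple i * (cs.simple i * w) := (cs.simple_mul_simple_cancel_left i).symm
    rw [hw']
    exact simple_mul i _ (by rw [← hw', hlen])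
      (ih _ (by lia) _ rfl)

end CoxeterSystem

/-- `δ` is a `W`-valued Weyl distance on the chambers `C`: symmetry and the axioms (WD1)–(WD3). -/
structure IsWeylDistance {B W : Type*} [Group W] {M : CoxeterMatrix B}
    (cs : CoxeterSystem M W) {C : Type*} (δ : C → C → W) : Prop where
  symm : ∀ c d, δ d c = (δ c d)⁻¹
  eq_one_iff : ∀ c d, δ c d = 1 ↔ c = d
  adjacent : ∀ (c d c' : C) (i : B), δ c' c = cs.simple i →
    (δ c' d = cs.simple i * δ c d ∨ δ c' d = δ c d) ∧
    (cs.length (cs.simple i * δ c d) = cs.length (δ c d) + 1 →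
      δ c' d = cs.simple i * δ c d)
  exists_adjacent : ∀ (c d : C) (i : B), ∃ c' : C,
    δ c' c = cs.simple i ∧ δ c' d = cs.simple i * δ c d

/-- Every panel of the chamber system has at least three chambers. -/
def IsThick {B W : Type*} [Group W] {M : CoxeterMatrix B} (cs : CoxeterSystem M W)
    {C : Type*} (δ : C → C → W) : Prop :=
  ∀ (c : C) (i : B), ∃ d e : C, d ≠ e ∧ δ c d = cs.simple i ∧ δ c e = cs.simple i

theorem IsThick.exists_dist_eq_simple_ne {B W : Type*} [Group W] {M : CoxeterMatrix B}
    {cs : CoxeterSystem M W} {C : Type*} {δ : C → C → W} (hthick : IsThick cs δ)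
    (c b : C) (i : B) : ∃ d, δ c d = cs.simple i ∧ d ≠ b := by
  obtain ⟨d, e, hde, hcd, hce⟩ := hthick c i
  by_cases hdb : d = b
  · exact ⟨e, hce, fun heb => hde (hdb.trans heb.symm)⟩
  · exact ⟨d, hcd, hdb⟩

namespace IsWeylDistance

variable {B W : Type*} [Group W] {M : CoxeterMatrix B} {cs : CoxeterSystem M W}
  {C : Type*} {δ : C → C → W}

theorem exists_dist_eq_mul (hδ : IsWeylDistance cs δ) (u : W) (c d : C) :
    ∃ e, δ e c = u ∧ δ e d = u * δ c d := by
  induction u using cs.induction_on_reduced_left with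
  | one => exact ⟨c, (hδ.eq_one_iff c c).mpr rfl, (one_mul _).symm⟩
  | simple_mul i u hred ih =>
    obtain ⟨e, hec, hed⟩ := ih
    obtain ⟨e', he'e, he'd⟩ := hδ.exists_adjacent e d i
    refine ⟨e', ?_, by rw [he'd, hed, mul_assoc]⟩
    have := (hδ.adjacent e c e' i he'e).2
    rw [hec] at this
    exact this hred

theorem exists_dist_eq (hδ : IsWeylDistance cs δ) (c : C) (u : W) : ∃ d, δ c d = u := by
  obtain ⟨d, hdc, -⟩ := hδ.exists_dist_eq_mul u⁻¹ c c
  exact ⟨d, by rw [hδ.symm, hdc, inv_inv]⟩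

theorem dist_eq_simple_of_ne (hδ : IsWeylDistance cs δ) {a b c : C} {i : B}
    (hab : δ a b = cs.simple i) (hac : δ a c = cs.simple i) (hbc : b ≠ c) :
    δ b c = cs.simple i := by
  have hba : δ b a = cs.simple i := by rw [hδ.symm, hab, cs.inv_simple]
  rcases (hδ.adjacent a c b i hba).1 with h | h
  · rw [hac, cs.simple_mul_simple_self, hδ.eq_one_iff] at h
    exact absurd h hbc
  · rw [h, hac]

def distInvariantSubgroup (hδ : IsWeylDistance cs δ) (π : C → Bool) : Subgroup W where
  carrier := distInvariantSet δ π
  one_mem' := fun ω ω' h => by rw [(hδ.eq_one_iff ω ω').mp h]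
  inv_mem' := fun {w} hw ω ω' h => (hw ω' ω (by rw [hδ.symm, h, inv_inv])).symm
  mul_mem' := fun {u v} hu hv ω ω' h => by
    obtain ⟨e, heω, heω'⟩ := hδ.exists_dist_eq_mul u⁻¹ ω ω'
    calc π ω = π e := hu ω e (by rw [hδ.symm, heω, inv_inv])
      _ = π ω' := hv e ω' (by rw [heω', h, inv_mul_cancel_left])

theorem simple_mem_distInvariantSet (hδ : IsWeylDistance cs δ) (hthick : IsThick cs δ)
    {π : C → Bool} {i : B} {w : W} (hred : cs.length (cs.simple i * w) = cs.length w + 1)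
    (hw : cs.simple i * w ∈ distInvariantSet δ π) : cs.simple i ∈ distInvariantSet δ π := by
  intro a b hab
  obtain ⟨c, hac, hcb⟩ := hthick.exists_dist_eq_simple_ne a b i
  have hbc : δ b c = cs.simple i := hδ.dist_eq_simple_of_ne hab hac hcb.symm
  obtain ⟨f, hcf⟩ := hδ.exists_dist_eq c w
  have hf_dist : ∀ x, δ x c = cs.simple i → δ x f = cs.simple i * w := fun x hxc => by
    have := (hδ.adjacent c f x i hxc).2
    rw [hcf] at this
    exact this hred
  rw [hw a f (hf_dist a hac), hw b f (hf_dist b hbc)]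

theorem mem_distInvariantSet_of_simple_mul (hδ : IsWeylDistance cs δ) (hthick : IsThick cs δ)
    {π : C → Bool} {i : B} {w : W} (hred : cs.length (cs.simple i * w) = cs.length w + 1)
    (hw : cs.simple i * w ∈ distInvariantSet δ π) : w ∈ distInvariantSet δ π := by
  intro c d hcd
  obtain ⟨c', hc'c, hc'd⟩ := hδ.exists_adjacent c d i
  calc π c = π c' := (hδ.simple_mem_distInvariantSet hthick hred hw c' c hc'c).symm
    _ = π d := hw c' d (by rw [hc'd, hcd])

theorem distInvariantSet_subset_closure (hδ : IsWeylDistance cs δ) (hthick : IsThick cs δ)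
    (π : C → Bool) :
    distInvariantSet δ π ⊆
      (Subgroup.closure (cs.simple '' {i | cs.simple i ∈ distInvariantSet δ π}) : Set W) := by
  intro w
  induction w using cs.induction_on_reduced_left with
  | one => exact fun _ => Subgroup.one_mem _
  | simple_mul i w hred ih =>
    intro hw
    exact Subgroup.mul_mem _
      (Subgroup.subset_closure ⟨i, hδ.simple_mem_distInvariantSet hthick hred hw, rfl⟩)
      (ih (hδ.mem_distInvariantSet_of_simple_mul hthick hred hw))

end IsWeylDistance

theorem pi_constant_on_J_residues_general
    {B W : Type*} [Group W] {M : CoxeterMatrix B} (cs : CoxeterSystem M W)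
    {C : Type*} (δ : C → C → W)
    (hsymm : ∀ c d, δ d c = (δ c d)⁻¹)
    (WD1 : ∀ c d, δ c d = 1 ↔ c = d)
    (WD2 : ∀ (c d c' : C) (i : B), δ c' c = cs.simple i →
      (δ c' d = cs.simple i * δ c d ∨ δ c' d = δ c d) ∧
      (cs.length (cs.simple i * δ c d) = cs.length (δ c d) + 1 →
        δ c' d = cs.simple i * δ c d))
    (WD3 : ∀ (c d : C) (i : B), ∃ c' : C,
      δ c' c = cs.simple i ∧ δ c' d = cs.simple i * δ c d)
    (thick : ∀ (c : C) (i : B), ∃ d e : C, d ≠ e ∧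
      δ c d = cs.simple i ∧ δ c e = cs.simple i)
    (π : C → Bool) (J : Set B)
    (hmin : ∀ J' : Set B,
      distInvariantSet δ π ⊆ (Subgroup.closure (cs.simple '' J') : Set W) → J ⊆ J') :
    ∀ ω ω' : C, δ ω ω' ∈ Subgroup.closure (cs.simple '' J) → π ω = π ω' := by
  intro ω ω' hω
  have hδ : IsWeylDistance cs δ := ⟨hsymm, WD1, WD2, WD3⟩
  have hJ : J ⊆ {i | cs.simple i ∈ distInvariantSet δ π} :=
    hmin _ (hδ.distInvariantSet_subset_closure thick π)
  have hclosure : Subgroup.closure (cs.simple '' J) ≤ hδ.distInvariantSubgroup π :=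
    (Subgroup.closure_le _).mpr (Set.image_subset_iff.mpr hJ)
  exact hclosure hω ω ω' rfl

/-- Let `X` (chambers `C`) be a thick building of type `(W,S)` with Weyl
distance `δ`, `π : Ch(X) → {0,1}` a map, and `E ⊆ W` the set of `w` such that
`δ(ω,ω') = w` implies `π(ω) = π(ω')`.  If `J ⊆ S` is minimal with `E ⊆ W_J` (the standard
parabolic subgroup generated by `J`), then `π` is constant on every `J`-residue of `X`. -/
theorem pi_constant_on_J_residues
    {B W : Type*} [Group W] {M : CoxeterMatrix B} (cs : CoxeterSystem M W)
    {C : Type*} (δ : C → C → W)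
    (hsymm : ∀ c d, δ d c = (δ c d)⁻¹)
    (WD1 : ∀ c d, δ c d = 1 ↔ c = d)
    (WD2 : ∀ (c d c' : C) (i : B), δ c' c = cs.simple i →
      (δ c' d = cs.simple i * δ c d ∨ δ c' d = δ c d) ∧
      (cs.length (cs.simple i * δ c d) = cs.length (δ c d) + 1 →
        δ c' d = cs.simple i * δ c d))
    (WD3 : ∀ (c d : C) (i : B), ∃ c' : C,
      δ c' c = cs.simple i ∧ δ c' d = cs.simple i * δ c d)
    (thick : ∀ (c : C) (i : B), ∃ d e : C, d ≠ e ∧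
      δ c d = cs.simple i ∧ δ c e = cs.simple i)
    (π : C → Bool) (J : Set B)
    (hJ : distInvariantSet δ π ⊆ (Subgroup.closure (cs.simple '' J) : Set W))
    (hmin : ∀ J' : Set B,
      distInvariantSet δ π ⊆ (Subgroup.closure (cs.simple '' J') : Set W) → J ⊆ J') :
    ∀ ω ω' : C, δ ω ω' ∈ Subgroup.closure (cs.simple '' J) → π ω = π ω' :=
  pi_constant_on_J_residues_general cs δ hsymm WD1 WD2 WD3 thick π J hmin
end
end

section
/- Let G be a group acting by measure-class preserving automorphisms on a standard probability space (X,μ), acting on a separable metric space (Z,d) by isometries, and suppose the diagonal G-action on X × X is ergodic. Then any G-equivariant measurable map φ : X → Z is essentially constant. -/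
/-!
For `ε > 0` the set `{(x, y) | d(φ x, φ y) < ε}` is invariant under the diagonal action, since
`G` acts on `Z` by isometries and `φ` is equivariant. It has positive measure: some ball of
radius `ε / 2` around a point of the support of `φ_* μ` pulls back to a set `B` of positive
measure, and `B × B` lies in it. By ergodicity it is therefore conull, so `φ x = φ y` for
almost every pair `(x, y)`, and Fubini makes `φ` almost everywhere equal to one of its values.
-/

open MeasureTheory Metric

section

variable {X Z : Type*} [MeasurableSpace X] {μ : Measure X}

section Metric

variable [PseudoMetricSpace Z] [MeasurableSpace Z] [BorelSpace Z] [HereditarilyLindelofSpace Z]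
  [NeZero μ] {φ : X → Z}

lemma exists_measure_preimage_ball_pos (hφ : Measurable φ) {r : ℝ} (hr : 0 < r) :
    ∃ c : Z, 0 < μ (φ ⁻¹' ball c r) := by
  have hν : μ.map φ ≠ 0 := (Measure.map_ne_zero_iff hφ.aemeasurable).2 (NeZero.ne μ)
  obtain ⟨c, hc⟩ := Measure.nonempty_support hν
  refine ⟨c, ?_⟩
  rw [← Measure.map_apply hφ measurableSet_ball]
  exact (Measure.mem_support_iff_forall c).1 hc _ (ball_mem_nhds c hr)

lemma measure_prod_dist_lt_pos [SFinite μ] (hφ : Measurable φ) {ε : ℝ} (hε : 0 < ε) :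
    0 < (μ.prod μ) {p : X × X | dist (φ p.1) (φ p.2) < ε} := by
  obtain ⟨c, hc⟩ := exists_measure_preimage_ball_pos (μ := μ) hφ (half_pos hε)
  have hsub : (φ ⁻¹' ball c (ε / 2)) ×ˢ (φ ⁻¹' ball c (ε / 2)) ⊆
      {p : X × X | dist (φ p.1) (φ p.2) < ε} := by
    rintro ⟨x, y⟩ ⟨hx, hy⟩
    calc dist (φ x) (φ y) ≤ dist (φ x) c + dist (φ y) c := dist_triangle_right _ _ _
      _ < ε / 2 + ε / 2 := add_lt_add hx hy
      _ = ε := add_halves ε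
  calc 0 < μ (φ ⁻¹' ball c (ε / 2)) * μ (φ ⁻¹' ball c (ε / 2)) := ENNReal.mul_pos hc.ne' hc.ne'
    _ = _ := (Measure.prod_prod _ _).symm
    _ ≤ _ := measure_mono hsub

end Metric

lemma ae_eq_of_forall_ae_dist_lt [MetricSpace Z] {α : Type*} [MeasurableSpace α]
    {ρ : Measure α} {f g : α → Z} (h : ∀ ε > 0, ∀ᵐ a ∂ρ, dist (f a) (g a) < ε) :
    ∀ᵐ a ∂ρ, f a = g a := by
  filter_upwards [ae_all_iff.2 fun n : ℕ => h (1 / (n + 1)) Nat.one_div_pos_of_nat] with a ha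
  refine eq_of_forall_dist_le fun ε hε => ?_
  obtain ⟨n, hn⟩ := exists_nat_one_div_lt hε
  exact (ha n).le.trans hn.le

lemma exists_ae_eq_const_of_ae_prod_eq [SFinite μ] [NeZero μ] {φ : X → Z}
    (h : ∀ᵐ p ∂μ.prod μ, φ p.1 = φ p.2) : ∃ z : Z, ∀ᵐ x ∂μ, φ x = z := by
  obtain ⟨x, hx⟩ := (Measure.ae_ae_of_ae_prod h).exists
  exact ⟨φ x, hx.mono fun _ => Eq.symm⟩

end

theorem equivariant_map_essentially_constant_general
    {G : Type*} [Group G]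
    {X : Type*} [MeasurableSpace X]
    [MulAction G X]
    (μ : Measure X) [IsProbabilityMeasure μ]
    (herg : ∀ A : Set (X × X), MeasurableSet A →
      (∀ g : G, (fun p : X × X => (g • p.1, g • p.2)) ⁻¹' A = A) →
      (μ.prod μ) A = 0 ∨ (μ.prod μ) Aᶜ = 0)
    {Z : Type*} [MetricSpace Z] [TopologicalSpace.SeparableSpace Z]
    [MeasurableSpace Z] [BorelSpace Z] [MulAction G Z]
    (hiso : ∀ (g : G) (z z' : Z), dist (g • z) (g • z') = dist z z')
    (φ : X → Z) (hφ : Measurable φ)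
    (hequiv : ∀ (g : G) (x : X), φ (g • x) = g • φ x) :
    ∃ z₀ : Z, ∀ᵐ x ∂μ, φ x = z₀ := by
  have := UniformSpace.secondCountable_of_separable Z
  have hclose : ∀ ε > 0, ∀ᵐ p ∂μ.prod μ, dist (φ p.1) (φ p.2) < ε := by
    intro ε hε
    have hmeas : MeasurableSet {p : X × X | dist (φ p.1) (φ p.2) < ε} :=
      measurableSet_lt (by fun_prop) measurable_const
    have hinv (g : G) : (fun p : X × X => (g • p.1, g • p.2)) ⁻¹'
        {p | dist (φ p.1) (φ p.2) < ε} = {p | dist (φ p.1) (φ p.2) < ε} := by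
      ext p
      simp only [Set.mem_preimage, Set.mem_ofPred_eq, hequiv, hiso]
    exact mem_ae_iff.2 <|
      (herg _ hmeas hinv).resolve_left (measure_prod_dist_lt_pos hφ hε).ne'
  exact exists_ae_eq_const_of_ae_prod_eq (ae_eq_of_forall_ae_dist_lt hclose)

/-- Let `G` act by measure-class preserving measurable automorphisms on a
standard probability space `(X,μ)` and by isometries on a separable metric space `Z`, and
suppose the diagonal `G`-action on `X × X` is ergodic.  Then any `G`-equivariant measurable
map `φ : X → Z` is essentially constant. -/
theorem equivariant_map_essentially_constant
    {G : Type*} [Group G]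
    {X : Type*} [MeasurableSpace X] [StandardBorelSpace X]
    [MulAction G X] (hmeas : ∀ g : G, Measurable (fun x : X => g • x))
    (μ : Measure X) [IsProbabilityMeasure μ]
    (hqmp : ∀ g : G, μ.map (fun x : X => g • x) ≪ μ ∧ μ ≪ μ.map (fun x : X => g • x))
    (herg : ∀ A : Set (X × X), MeasurableSet A →
      (∀ g : G, (fun p : X × X => (g • p.1, g • p.2)) ⁻¹' A = A) →
      (μ.prod μ) A = 0 ∨ (μ.prod μ) Aᶜ = 0)
    {Z : Type*} [MetricSpace Z] [TopologicalSpace.SeparableSpace Z]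
    [MeasurableSpace Z] [BorelSpace Z] [MulAction G Z]
    (hiso : ∀ (g : G) (z z' : Z), dist (g • z) (g • z') = dist z z')
    (φ : X → Z) (hφ : Measurable φ)
    (hequiv : ∀ (g : G) (x : X), φ (g • x) = g • φ x) :
    ∃ z₀ : Z, ∀ᵐ x ∂μ, φ x = z₀ :=
  equivariant_map_essentially_constant_general μ herg hiso φ hφ hequiv
end
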